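/- arXiv:math/0006016 — 7 statements merged into one kernel-verified Lean document; each statement's English description precedes it below -/
import Mathlib

section
/- Let a>0, α>0, β≥0, g∈L^∞(0,a), let τ₁,τ₂:[0,a]→[−∞,+∞] be continuous with τ₁≤τ₂, U:={(x,t): τ₁(x)<t<τ₂(x)}, and let φ=(φ^x,φ^t):U→ℝ×ℝ be a bounded Borel vector field satisfying conditions (a1) and (b1). For u piecewise C¹ with finite jump set with graph Γ_u⊂U, equality F(u) = ∫₀ᵃ[φ^x(x,u(x))u'(x) − φ^t(x,u(x))]dx + Σ_{x∈S_u} ν_u(x)·∫_{u⁻(x)}^{u⁺(x)}φ^x(x,t)dt holds if and only if: (a2) φ^x(x,u(x))=2u'(x) and φ^t(x,u(x))=|u'(x)|²−β|u(x)−g(x)|² for a.e. x∈(0,a), and (b2) ∫_{u⁻(x)}^{u⁺(x)}φ^x(x,t)dt = α·ν_u(x) for every x∈S_u. -/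
open MeasureTheory Set Filter

set_option maxHeartbeats 1000000

lemma bdd_aux (a : ℝ) (h : ℝ → ℝ) (D : Set ℝ) (hD : D ⊆ Set.Ioo 0 a)
    (hL : ∀ x ∈ Set.Ioc 0 a, ∃ L, Tendsto h (nhdsWithin x (Set.Iio x)) (nhds L))
    (hR : ∀ x ∈ Set.Ico 0 a, ∃ L, Tendsto h (nhdsWithin x (Set.Ioi x)) (nhds L)) :
    ∃ C, ∀ x ∈ D, |h x| ≤ C := by
  have loc : ∀ x₀ ∈ Set.Icc 0 a, ∃ C : ℝ, ∃ V : Set ℝ, V ∈ nhds x₀ ∧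
      ∀ x ∈ V ∩ D, |h x| ≤ C := by
    intro x₀ hx₀
    obtain ⟨Bl, b, hb, hbl⟩ : ∃ B bb, bb < x₀ ∧ ∀ x ∈ Set.Ioo bb x₀ ∩ D, |h x| ≤ B := by
      rcases lt_or_eq_of_le hx₀.1 with h0 | h0
      · obtain ⟨L, hL'⟩ := hL x₀ ⟨h0, hx₀.2⟩
        have hev : {y | |h y| ≤ |L| + 1} ∈ nhdsWithin x₀ (Set.Iio x₀) := by
          filter_upwards [hL' (Metric.ball_mem_nhds L one_pos)] with y hy
          have : |h y - L| < 1 := by simpa [Real.dist_eq] using hy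
          calc |h y| ≤ |h y - L| + |L| := by
                have := abs_sub_abs_le_abs_sub (h y) L; linarith [abs_abs (h y)]
            _ ≤ |L| + 1 := by linarith
        obtain ⟨l, hl, hsub⟩ := mem_nhdsLT_iff_exists_Ioo_subset.1 hev
        exact ⟨|L| + 1, l, hl, fun x hx => hsub ⟨hx.1.1, hx.1.2⟩⟩
      · refine ⟨0, x₀ - 1, by linarith, fun x hx => absurd (hD hx.2).1 ?_⟩
        simp only [not_lt]
        have := hx.1.2
        linarith [h0]
    obtain ⟨Br, c, hc, hbr⟩ : ∃ B cc, x₀ < cc ∧ ∀ x ∈ Set.Ioo x₀ cc ∩ D, |h x| ≤ B := by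
      rcases lt_or_eq_of_le hx₀.2 with h0 | h0
      · obtain ⟨L, hR'⟩ := hR x₀ ⟨hx₀.1, h0⟩
        have hev : {y | |h y| ≤ |L| + 1} ∈ nhdsWithin x₀ (Set.Ioi x₀) := by
          filter_upwards [hR' (Metric.ball_mem_nhds L one_pos)] with y hy
          have : |h y - L| < 1 := by simpa [Real.dist_eq] using hy
          calc |h y| ≤ |h y - L| + |L| := by
                have := abs_sub_abs_le_abs_sub (h y) L; linarith [abs_abs (h y)]
            _ ≤ |L| + 1 := by linarith
        obtain ⟨l, hl, hsub⟩ := mem_nhdsGT_iff_exists_Ioo_subset.1 hev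
        exact ⟨|L| + 1, l, hl, fun x hx => hsub ⟨hx.1.1, hx.1.2⟩⟩
      · refine ⟨0, x₀ + 1, by linarith, fun x hx => absurd (hD hx.2).2 ?_⟩
        simp only [not_lt]
        have := hx.1.1
        linarith [h0]
    refine ⟨max (max Bl Br) |h x₀|, Set.Ioo b c, Ioo_mem_nhds hb hc, ?_⟩
    rintro x ⟨⟨hxb, hxc⟩, hxD⟩
    rcases lt_trichotomy x x₀ with hlt | heq | hgt
    · exact le_trans (hbl x ⟨⟨hxb, hlt⟩, hxD⟩) (le_max_of_le_left (le_max_left _ _))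
    · rw [heq]; exact le_max_right _ _
    · exact le_trans (hbr x ⟨⟨hgt, hxc⟩, hxD⟩) (le_max_of_le_left (le_max_right _ _))
  choose! C V hV hCV using loc
  obtain ⟨t, hts, htcov⟩ := (isCompact_Icc (a := (0:ℝ)) (b := a)).elim_nhds_subcover V
    (fun x hx => hV x hx)
  refine ⟨∑ x₀ ∈ t, max (C x₀) 0, fun x hx => ?_⟩
  have hxI : x ∈ Set.Icc 0 a := Set.Ioo_subset_Icc_self (hD hx)
  obtain ⟨x₀, hx₀t, hxV⟩ := Set.mem_iUnion₂.1 (htcov hxI)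
  calc |h x| ≤ C x₀ := hCV x₀ (hts x₀ hx₀t) x ⟨hxV, hx⟩
    _ ≤ max (C x₀) 0 := le_max_left _ _
    _ ≤ ∑ x₀ ∈ t, max (C x₀) 0 := Finset.single_le_sum (f := fun y => max (C y) 0) (fun i _ => le_max_right _ _) hx₀t

/-- A piecewise `C¹` function with finite jump set on the interval `(0, a)`:
there is a finite set `S ⊆ (0,a)` such that the function is `C¹` on `(0,a) \ S`,
the function and its derivative extend continuously to the closure of each
connected component of `(0,a) \ S` (i.e. have one-sided limits at `0`, `a` and at
each point of `S`), and the one-sided limits differ exactly at the points of `S`. -/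
structure PiecewiseC1 (a : ℝ) where
  /-- the function -/
  f : ℝ → ℝ
  /-- its derivative (off the jump set) -/
  f' : ℝ → ℝ
  /-- the (finite) jump set -/
  S : Finset ℝ
  /-- the left limits `f(x−)` -/
  limL : ℝ → ℝ
  /-- the right limits `f(x+)` -/
  limR : ℝ → ℝ
  S_sub : ∀ x ∈ S, x ∈ Set.Ioo 0 a
  hasDeriv : ∀ x ∈ Set.Ioo 0 a \ (S : Set ℝ), HasDerivAt f (f' x) x
  derivCont : ContinuousOn f' (Set.Ioo 0 a \ (S : Set ℝ))
  tendsto_limL : ∀ x ∈ Set.Ioc 0 a, Filter.Tendsto f (nhdsWithin x (Set.Iio x)) (nhds (limL x))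
  tendsto_limR : ∀ x ∈ Set.Ico 0 a, Filter.Tendsto f (nhdsWithin x (Set.Ioi x)) (nhds (limR x))
  jump_iff : ∀ x ∈ Set.Ioo 0 a, (limL x ≠ limR x ↔ x ∈ S)
  deriv_limL : ∀ x ∈ Set.Ioc 0 a, ∃ L : ℝ, Filter.Tendsto f' (nhdsWithin x (Set.Iio x)) (nhds L)
  deriv_limR : ∀ x ∈ Set.Ico 0 a, ∃ L : ℝ, Filter.Tendsto f' (nhdsWithin x (Set.Ioi x)) (nhds L)

namespace PiecewiseC1

variable {a : ℝ}

/-- `v⁻(x)`: the smaller one-sided limit at jump points, `v(x)` elsewhere. -/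
noncomputable def lower (v : PiecewiseC1 a) (x : ℝ) : ℝ :=
  if x ∈ v.S then min (v.limL x) (v.limR x) else v.f x

/-- `v⁺(x)`: the larger one-sided limit at jump points, `v(x)` elsewhere. -/
noncomputable def upper (v : PiecewiseC1 a) (x : ℝ) : ℝ :=
  if x ∈ v.S then max (v.limL x) (v.limR x) else v.f x

/-- `ν_v(x) = sign (v(x+) − v(x−))`. -/
noncomputable def nu (v : PiecewiseC1 a) (x : ℝ) : ℝ :=
  Real.sign (v.limR x - v.limL x)

/-- The (complete) graph `Γ_v = {(x,t) : v⁻(x) ≤ t ≤ v⁺(x)}` is contained in `U`. -/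
def GraphIn (v : PiecewiseC1 a) (U : Set (ℝ × ℝ)) : Prop :=
  ∀ x ∈ Set.Ioo 0 a, ∀ t : ℝ, v.lower x ≤ t → t ≤ v.upper x → (x, t) ∈ U

end PiecewiseC1

/-- The one-dimensional Mumford–Shah functional
`F(v) = ∫₀ᵃ |v'|² dx + α card S_v + β ∫₀ᵃ |v − g|² dx`. -/
noncomputable def MS (a α β : ℝ) (g : ℝ → ℝ) (v : PiecewiseC1 a) : ℝ :=
  (∫ x in Set.Ioo 0 a, (v.f' x) ^ 2) + α * (v.S.card : ℝ)
    + β * ∫ x in Set.Ioo 0 a, (v.f x - g x) ^ 2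

/-- **Lemma 3.7 (equality characterization), one-dimensional case.**
Under (a1) and (b1), the Mumford–Shah energy of `u` equals the flux of `φ`
through the complete graph of `u` if and only if conditions (a2) and (b2) hold. -/
theorem statement_4
    (a α β : ℝ) (ha : 0 < a) (hα : 0 < α) (hβ : 0 ≤ β)
    (g : ℝ → ℝ) (hg_meas : Measurable g) (hg_bdd : ∃ C : ℝ, ∀ x ∈ Set.Ioo 0 a, |g x| ≤ C)
    (τ₁ τ₂ : ℝ → EReal)
    (hτ₁ : ContinuousOn τ₁ (Set.Icc 0 a)) (hτ₂ : ContinuousOn τ₂ (Set.Icc 0 a))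
    (hττ : ∀ x ∈ Set.Icc 0 a, τ₁ x ≤ τ₂ x)
    (U : Set (ℝ × ℝ))
    (hU : U = {p : ℝ × ℝ | p.1 ∈ Set.Ioo 0 a ∧ τ₁ p.1 < (p.2 : EReal) ∧ (p.2 : EReal) < τ₂ p.1})
    (φx φt : ℝ → ℝ → ℝ)
    (hφ_meas : Measurable (fun p : ℝ × ℝ => (φx p.1 p.2, φt p.1 p.2)))
    (hφ_bdd : ∃ C : ℝ, ∀ p ∈ U, |φx p.1 p.2| ≤ C ∧ |φt p.1 p.2| ≤ C)
    -- (a1)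
    (ha1 : ∀ᵐ x ∂(volume.restrict (Set.Ioo 0 a)), ∀ t : ℝ,
      τ₁ x < (t : EReal) → (t : EReal) < τ₂ x →
      (1 / 4) * (φx x t) ^ 2 ≤ φt x t + β * (t - g x) ^ 2)
    -- (b1)
    (hb1 : ∀ x ∈ Set.Ioo 0 a, ∀ t₁ t₂ : ℝ, τ₁ x < (t₁ : EReal) → t₁ < t₂ →
      (t₂ : EReal) < τ₂ x → |∫ t in t₁..t₂, φx x t| ≤ α)
    (u : PiecewiseC1 a) (hu : u.GraphIn U) :
    (MS a α β g u =
      (∫ x in Set.Ioo 0 a, (φx x (u.f x) * u.f' x - φt x (u.f x)))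
        + ∑ x ∈ u.S, u.nu x * ∫ t in u.lower x..u.upper x, φx x t)
    ↔
    ((∀ᵐ x ∂(volume.restrict (Set.Ioo 0 a)),
        φx x (u.f x) = 2 * u.f' x ∧ φt x (u.f x) = (u.f' x) ^ 2 - β * (u.f x - g x) ^ 2) ∧
      (∀ x ∈ u.S, (∫ t in u.lower x..u.upper x, φx x t) = α * u.nu x)) := by
  classical
  subst hU
  set μ := volume.restrict (Set.Ioo 0 a) with hμ
  set D : Set ℝ := Set.Ioo 0 a \ (↑u.S : Set ℝ) with hD_def
  have hDsub : D ⊆ Set.Ioo 0 a := Set.diff_subset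
  have hDmeas : MeasurableSet D := measurableSet_Ioo.diff u.S.finite_toSet.measurableSet
  have hSnull : (volume : Measure ℝ) (↑u.S : Set ℝ) = 0 :=
    u.S.countable_toSet.measure_zero _
  have hmemD : ∀ᵐ x ∂μ, x ∈ D := by
    have h1 : ∀ᵐ x ∂μ, x ∈ Set.Ioo 0 a := ae_restrict_mem measurableSet_Ioo
    have h2 : ∀ᵐ x ∂μ, x ∉ (↑u.S : Set ℝ) :=
      ae_restrict_of_ae (measure_eq_zero_iff_ae_notMem.1 hSnull)
    filter_upwards [h1, h2] with x hx1 hx2 using ⟨hx1, hx2⟩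
  have hIooD : Set.Ioo 0 a =ᵐ[(volume : Measure ℝ)] D :=
    (diff_ae_eq_self.2 (measure_mono_null Set.inter_subset_right hSnull)).symm
  have hrestrict : μ = volume.restrict D := Measure.restrict_congr_set hIooD
  -- measurability
  have hf_contOn : ContinuousOn u.f D := fun x hx =>
    ((u.hasDeriv x hx).continuousAt).continuousWithinAt
  have hf_aem : AEMeasurable u.f μ := by
    rw [hrestrict]; exact hf_contOn.aemeasurable hDmeas
  have hf'_aem : AEMeasurable u.f' μ := by
    rw [hrestrict]; exact u.derivCont.aemeasurable hDmeas
  have hφx_meas : Measurable (fun p : ℝ × ℝ => φx p.1 p.2) := measurable_fst.comp hφ_meas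
  have hφt_meas : Measurable (fun p : ℝ × ℝ => φt p.1 p.2) := measurable_snd.comp hφ_meas
  have hpair : AEMeasurable (fun x => (x, u.f x)) μ := aemeasurable_id.prodMk hf_aem
  have hφxu : AEMeasurable (fun x => φx x (u.f x)) μ := hφx_meas.comp_aemeasurable hpair
  have hφtu : AEMeasurable (fun x => φt x (u.f x)) μ := hφt_meas.comp_aemeasurable hpair
  -- bounds
  obtain ⟨C1, hC1⟩ := bdd_aux a u.f' D hDsub u.deriv_limL u.deriv_limR
  obtain ⟨C0, hC0⟩ := bdd_aux a u.f D hDsub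
    (fun x hx => ⟨u.limL x, u.tendsto_limL x hx⟩)
    (fun x hx => ⟨u.limR x, u.tendsto_limR x hx⟩)
  obtain ⟨Cg, hCg⟩ := hg_bdd
  obtain ⟨Cφ, hCφ⟩ := hφ_bdd
  have hmemU : ∀ x ∈ D, (x, u.f x) ∈
      {p : ℝ × ℝ | p.1 ∈ Set.Ioo 0 a ∧ τ₁ p.1 < (p.2 : EReal) ∧ (p.2 : EReal) < τ₂ p.1} := by
    intro x hx
    have hxS : x ∉ u.S := fun h => hx.2 (Finset.mem_coe.2 h)
    have hl : u.lower x = u.f x := by simp [PiecewiseC1.lower, hxS]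
    have hup : u.upper x = u.f x := by simp [PiecewiseC1.upper, hxS]
    exact hu x hx.1 (u.f x) hl.le hup.ge
  haveI : IsFiniteMeasure μ := by
    constructor
    rw [hμ, Measure.restrict_apply_univ]
    exact measure_Ioo_lt_top
  -- integrability
  have int_of_bdd : ∀ (F : ℝ → ℝ) (C : ℝ), AEStronglyMeasurable F μ →
      (∀ x ∈ D, |F x| ≤ C) → Integrable F μ := by
    intro F C hm hb
    refine Integrable.mono' (integrable_const C) hm ?_
    filter_upwards [hmemD] with x hx
    simpa [Real.norm_eq_abs] using hb x hx
  have hI1 : Integrable (fun x => (u.f' x) ^ 2) μ := by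
    refine int_of_bdd _ (C1 ^ 2) ((hf'_aem.pow_const 2).aestronglyMeasurable) ?_
    intro x hx
    have h := hC1 x hx
    have := abs_nonneg (u.f' x)
    rw [abs_of_nonneg (sq_nonneg _)]
    nlinarith [sq_abs (u.f' x)]
  have hI2 : Integrable (fun x => (u.f x - g x) ^ 2) μ := by
    refine int_of_bdd _ ((C0 + Cg) ^ 2) (((hf_aem.sub hg_meas.aemeasurable).pow_const
      2).aestronglyMeasurable) ?_
    intro x hx
    have h1 := hC0 x hx
    have h2 := hCg x (hDsub hx)
    have h3 : |u.f x - g x| ≤ C0 + Cg := (abs_sub _ _).trans (by linarith)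
    rw [abs_of_nonneg (sq_nonneg _)]
    nlinarith [abs_nonneg (u.f x - g x), sq_abs (u.f x - g x)]
  have hI3 : Integrable (fun x => φx x (u.f x) * u.f' x - φt x (u.f x)) μ := by
    refine int_of_bdd _ (Cφ * C1 + Cφ) (((hφxu.mul hf'_aem).sub hφtu).aestronglyMeasurable) ?_
    intro x hx
    have h1 := (hCφ (x, u.f x) (hmemU x hx)).1
    have h2 := (hCφ (x, u.f x) (hmemU x hx)).2
    have h3 := hC1 x hx
    have h4 : (0:ℝ) ≤ Cφ := le_trans (abs_nonneg _) h2
    calc |φx x (u.f x) * u.f' x - φt x (u.f x)|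
        ≤ |φx x (u.f x) * u.f' x| + |φt x (u.f x)| := abs_sub _ _
      _ = |φx x (u.f x)| * |u.f' x| + |φt x (u.f x)| := by rw [abs_mul]
      _ ≤ Cφ * C1 + Cφ := by
          have := mul_le_mul h1 h3 (abs_nonneg _) h4
          linarith
  have hI2β : Integrable (fun x => β * (u.f x - g x) ^ 2) μ := hI2.const_mul β
  -- the nonnegative integrand
  set ψ : ℝ → ℝ := fun x => (u.f' x) ^ 2 + β * (u.f x - g x) ^ 2
      - (φx x (u.f x) * u.f' x - φt x (u.f x)) with hψdef
  have hψ_int : Integrable ψ μ := (hI1.add hI2β).sub hI3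
  have hψ_nonneg : ∀ᵐ x ∂μ, 0 ≤ ψ x := by
    filter_upwards [ha1, hmemD] with x h1 hxD
    obtain ⟨_, ht1, ht2⟩ := hmemU x hxD
    have h := h1 (u.f x) ht1 ht2
    simp only [hψdef]
    nlinarith [sq_nonneg (u.f' x - φx x (u.f x) / 2)]
  have hA_nonneg : 0 ≤ ∫ x, ψ x ∂μ := integral_nonneg_of_ae hψ_nonneg
  -- jump facts
  have hjump : ∀ x ∈ u.S, (u.nu x = 1 ∨ u.nu x = -1) ∧
      |∫ t in u.lower x..u.upper x, φx x t| ≤ α := by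
    intro x hx
    have hxI : x ∈ Set.Ioo 0 a := u.S_sub x hx
    have hne : u.limL x ≠ u.limR x := (u.jump_iff x hxI).2 hx
    have hd : u.limR x - u.limL x ≠ 0 := sub_ne_zero.2 hne.symm
    have hν : u.nu x = 1 ∨ u.nu x = -1 := by
      rcases hd.lt_or_gt with h | h
      · right; exact Real.sign_of_neg h
      · left; exact Real.sign_of_pos h
    have hl : u.lower x = min (u.limL x) (u.limR x) := by simp [PiecewiseC1.lower, hx]
    have hup : u.upper x = max (u.limL x) (u.limR x) := by simp [PiecewiseC1.upper, hx]
    have hlu : u.lower x < u.upper x := by rw [hl, hup]; exact min_lt_max.2 hne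
    have hmem1 := hu x hxI (u.lower x) le_rfl hlu.le
    have hmem2 := hu x hxI (u.upper x) hlu.le le_rfl
    exact ⟨hν, hb1 x hxI (u.lower x) (u.upper x) hmem1.2.1 hlu hmem2.2.2⟩
  have hterm_nonneg : ∀ x ∈ u.S,
      0 ≤ α - u.nu x * ∫ t in u.lower x..u.upper x, φx x t := by
    intro x hx
    obtain ⟨hν, habs⟩ := hjump x hx
    have : u.nu x * (∫ t in u.lower x..u.upper x, φx x t)
        ≤ |∫ t in u.lower x..u.upper x, φx x t| := by
      rcases hν with h | h <;> rw [h]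
      · simpa using le_abs_self _
      · simpa using neg_le_abs _
    linarith
  have hB_nonneg : 0 ≤ ∑ x ∈ u.S,
      (α - u.nu x * ∫ t in u.lower x..u.upper x, φx x t) :=
    Finset.sum_nonneg hterm_nonneg
  -- the decomposition
  have hA : ∫ x, ψ x ∂μ = (∫ x in Set.Ioo 0 a, (u.f' x) ^ 2)
      + β * (∫ x in Set.Ioo 0 a, (u.f x - g x) ^ 2)
      - ∫ x in Set.Ioo 0 a, (φx x (u.f x) * u.f' x - φt x (u.f x)) := by
    have hI12 : Integrable (fun x => (u.f' x) ^ 2 + β * (u.f x - g x) ^ 2) μ := by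
      exact hI1.add hI2β
    simp only [hψdef]
    rw [integral_sub hI12 hI3, integral_add hI1 hI2β, integral_const_mul]
  have hB : ∑ x ∈ u.S, (α - u.nu x * ∫ t in u.lower x..u.upper x, φx x t)
      = α * (u.S.card : ℝ)
        - ∑ x ∈ u.S, u.nu x * ∫ t in u.lower x..u.upper x, φx x t := by
    rw [Finset.sum_sub_distrib, Finset.sum_const, nsmul_eq_mul, mul_comm]
  have hiff : (MS a α β g u =
      (∫ x in Set.Ioo 0 a, (φx x (u.f x) * u.f' x - φt x (u.f x)))
        + ∑ x ∈ u.S, u.nu x * ∫ t in u.lower x..u.upper x, φx x t)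
      ↔ (∫ x, ψ x ∂μ) + (∑ x ∈ u.S,
          (α - u.nu x * ∫ t in u.lower x..u.upper x, φx x t)) = 0 := by
    rw [hA, hB, MS]
    constructor <;> intro h <;> linarith
  rw [hiff]
  constructor
  · intro h
    have hA0 : ∫ x, ψ x ∂μ = 0 := le_antisymm (by linarith) hA_nonneg
    have hB0 : ∑ x ∈ u.S, (α - u.nu x * ∫ t in u.lower x..u.upper x, φx x t) = 0 := by
      linarith
    have hψ0 : ψ =ᵐ[μ] 0 := (integral_eq_zero_iff_of_nonneg_ae hψ_nonneg hψ_int).1 hA0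
    constructor
    · filter_upwards [hψ0, ha1, hmemD] with x h0 h1 hxD
      obtain ⟨_, ht1, ht2⟩ := hmemU x hxD
      have ha1x := h1 (u.f x) ht1 ht2
      have h0' : (u.f' x) ^ 2 + β * (u.f x - g x) ^ 2
          - (φx x (u.f x) * u.f' x - φt x (u.f x)) = 0 := h0
      have hsq : (u.f' x - φx x (u.f x) / 2) ^ 2 ≤ 0 := by nlinarith
      have hsq0 : u.f' x - φx x (u.f x) / 2 = 0 := by
        nlinarith [sq_nonneg (u.f' x - φx x (u.f x) / 2)]
      constructor
      · linarith
      · nlinarith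
    · intro x hx
      have h0 := (Finset.sum_eq_zero_iff_of_nonneg hterm_nonneg).1 hB0 x hx
      obtain ⟨hν, _⟩ := hjump x hx
      rcases hν with h | h <;> rw [h] at h0 ⊢ <;> linarith
  · rintro ⟨ha2, hb2⟩
    have hψ0 : ψ =ᵐ[μ] 0 := by
      filter_upwards [ha2] with x hx
      obtain ⟨e1, e2⟩ := hx
      simp only [hψdef, Pi.zero_apply]
      rw [e1, e2]; ring
    have hA0 : ∫ x, ψ x ∂μ = 0 := integral_eq_zero_of_ae hψ0
    have hB0 : ∑ x ∈ u.S, (α - u.nu x * ∫ t in u.lower x..u.upper x, φx x t) = 0 := by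
      refine Finset.sum_eq_zero fun x hx => ?_
      obtain ⟨hν, _⟩ := hjump x hx
      rw [hb2 x hx]
      rcases hν with h | h <;> rw [h] <;> ring
    linarith
end

section
/- Let Ω⊂ℝⁿ be a bounded open set and let φ=(φ^x,φ^t):Ω×ℝ→ℝⁿ×ℝ be a bounded C¹ vector field with div φ(x,t) = div_x φ^x(x,t) + ∂_t φ^t(x,t) = 0 at every (x,t)∈Ω×ℝ. Let u,v:Ω→ℝ be bounded C¹ functions such that u−v has compact support in Ω. Then ∫_Ω [φ^x(x,u(x))·∇u(x) − φ^t(x,u(x))] dx = ∫_Ω [φ^x(x,v(x))·∇v(x) − φ^t(x,v(x))] dx. -/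
open MeasureTheory Set Filter
open scoped RealInnerProductSpace ENNReal

set_option maxHeartbeats 1000000
set_option synthInstance.maxHeartbeats 100000

open MeasureTheory Set Filter Asymptotics
open scoped Topology

variable {H : Type*} [NormedAddCommGroup H] [NormedSpace ℝ H] [ProperSpace H]
variable {E : Type*} [NormedAddCommGroup E] [NormedSpace ℝ E] [CompleteSpace E]

/-- Joint differentiability of `(x, s) ↦ ∫ t in c..s, Φ (x, t)` for `Φ` that is `C¹`
on `Ω ×ˢ univ`. -/
theorem hasFDerivAt_parametric_intervalIntegral
    {Ω : Set H} (hΩ_open : IsOpen Ω) {Φ : H × ℝ → E}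
    (hΦ : ContDiffOn ℝ 1 Φ (Ω ×ˢ (univ : Set ℝ)))
    {x₀ : H} (hx₀ : x₀ ∈ Ω) (s₀ c : ℝ) :
    HasFDerivAt (fun p : H × ℝ => ∫ t in c..p.2, Φ (p.1, t))
      (((∫ t in c..s₀, (fderiv ℝ Φ (x₀, t)).comp
          ((ContinuousLinearMap.id ℝ H).prod 0)).comp (ContinuousLinearMap.fst ℝ H ℝ))
        + (ContinuousLinearMap.snd ℝ H ℝ).smulRight (Φ (x₀, s₀))) (x₀, s₀) := by
  have hS_open : IsOpen (Ω ×ˢ (univ : Set ℝ)) := hΩ_open.prod isOpen_univ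
  have hmem : ∀ x ∈ Ω, ∀ t : ℝ, (x, t) ∈ Ω ×ˢ (univ : Set ℝ) := fun x hx t => ⟨hx, trivial⟩
  have hΦc : ContinuousOn Φ (Ω ×ˢ (univ : Set ℝ)) := hΦ.continuousOn
  have hΦ' : ContinuousOn (fderiv ℝ Φ) (Ω ×ˢ (univ : Set ℝ)) :=
    hΦ.continuousOn_fderiv_of_isOpen hS_open le_rfl
  have hdiffAt : ∀ p ∈ Ω ×ˢ (univ : Set ℝ), HasFDerivAt Φ (fderiv ℝ Φ p) p := fun p hp =>
    ((hΦ.contDiffAt (hS_open.mem_nhds hp)).differentiableAt one_ne_zero).hasFDerivAt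
  set B : H → ℝ → (H →L[ℝ] E) := fun x t =>
    (fderiv ℝ Φ (x, t)).comp ((ContinuousLinearMap.id ℝ H).prod 0) with hB
  have hBx : ∀ x ∈ Ω, ∀ t : ℝ, HasFDerivAt (fun y => Φ (y, t)) (B x t) x := by
    intro x hx t
    exact (hdiffAt (x, t) (hmem x hx t)).comp x ((hasFDerivAt_id x).prodMk (hasFDerivAt_const t x))
  have hslice_cont : ∀ x ∈ Ω, Continuous (fun t => Φ (x, t)) := by
    intro x hx
    rw [← continuousOn_univ]
    exact hΦc.comp ((continuous_const.prodMk continuous_id).continuousOn)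
      (fun t _ => hmem x hx t)
  have hslice_int : ∀ x ∈ Ω, ∀ a b : ℝ, IntervalIntegrable (fun t => Φ (x, t)) volume a b :=
    fun x hx a b => (hslice_cont x hx).intervalIntegrable a b
  -- a closed ball around x₀ inside Ω
  obtain ⟨ε, hε, hball⟩ := Metric.isOpen_iff.mp hΩ_open x₀ hx₀
  have hcball : Metric.closedBall x₀ (ε / 2) ⊆ Ω :=
    (Metric.closedBall_subset_ball (by linarith)).trans hball
  -- bound for the fderiv on a compact neighbourhood
  obtain ⟨M, hM⟩ : ∃ M, ∀ p ∈ Metric.closedBall x₀ (ε / 2) ×ˢ uIcc c s₀,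
      ‖fderiv ℝ Φ p‖ ≤ M := by
    have hcpt : IsCompact (Metric.closedBall x₀ (ε / 2) ×ˢ uIcc c s₀) :=
      (isCompact_closedBall _ _).prod isCompact_uIcc
    exact hcpt.exists_bound_of_continuousOn
      (hΦ'.mono (fun p (hp : p ∈ _ ×ˢ _) => ⟨hcball hp.1, trivial⟩))
  have hBnorm : ∀ y ∈ Metric.closedBall x₀ (ε / 2), ∀ t ∈ uIcc c s₀, ‖B y t‖ ≤ M := by
    intro y hy t ht
    have h1 : ‖fderiv ℝ Φ (y, t)‖ ≤ M := hM (y, t) ⟨hy, ht⟩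
    refine ContinuousLinearMap.opNorm_le_bound _
      (le_trans (norm_nonneg _) h1) (fun z => ?_)
    have : B y t z = fderiv ℝ Φ (y, t) (z, 0) := rfl
    rw [this]
    calc ‖fderiv ℝ Φ (y, t) (z, 0)‖ ≤ ‖fderiv ℝ Φ (y, t)‖ * ‖(z, (0:ℝ))‖ :=
          ContinuousLinearMap.le_opNorm _ _
    _ ≤ M * ‖z‖ := by
        rw [Prod.norm_def]
        simp only [norm_zero]
        rw [max_eq_left (norm_nonneg z)]
        exact mul_le_mul_of_nonneg_right h1 (norm_nonneg z)
  -- derivative in x at fixed endpoints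
  have A2 : HasFDerivAt (𝕜 := ℝ) (fun y => ∫ t in c..s₀, Φ (y, t))
      (∫ t in c..s₀, B x₀ t) x₀ := by
    apply intervalIntegral.hasFDerivAt_integral_of_dominated_of_fderiv_le
      (F := fun y t => Φ (y, t)) (F' := fun y t => B y t) (bound := fun _ => M)
      (Metric.ball_mem_nhds x₀ (half_pos hε))
    · filter_upwards [hΩ_open.mem_nhds hx₀] with y hy
      exact ((hslice_cont y hy).aestronglyMeasurable).restrict
    · exact hslice_int x₀ hx₀ c s₀
    · apply Continuous.aestronglyMeasurable
      apply Continuous.clm_comp _ continuous_const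
      rw [← continuousOn_univ]
      exact hΦ'.comp ((continuous_const.prodMk continuous_id).continuousOn)
        (fun t _ => hmem x₀ hx₀ t)
    · apply Eventually.of_forall
      intro t ht y hy
      exact hBnorm y (Metric.ball_subset_closedBall hy) t (uIoc_subset_uIcc ht)
    · exact intervalIntegrable_const
    · apply Eventually.of_forall
      intro t _ y hy
      exact hBx y (hcball (Metric.ball_subset_closedBall hy)) t
  -- now the joint derivative
  rw [hasFDerivAt_iff_isLittleO]
  set p₀ : H × ℝ := (x₀, s₀) with hp₀
  set A : H →L[ℝ] E := ∫ t in c..s₀, B x₀ t with hA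
  set r₁ : H × ℝ → E := fun p =>
    (∫ t in c..s₀, Φ (p.1, t)) - (∫ t in c..s₀, Φ (x₀, t)) - A (p.1 - x₀) with hr₁
  set r₂ : H × ℝ → E := fun p => ∫ t in s₀..p.2, (Φ (p.1, t) - Φ p₀) with hr₂
  have h₁ : r₁ =o[𝓝 p₀] fun p : H × ℝ => p - p₀ := by
    have := (A2.isLittleO).comp_tendsto
      (continuous_fst.tendsto p₀ : Tendsto Prod.fst (𝓝 p₀) (𝓝 x₀))
    refine this.trans_isBigO (isBigO_of_le _ (fun p => ?_))
    show ‖p.1 - x₀‖ ≤ ‖p - p₀‖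
    exact norm_fst_le (p - p₀)
  have h₂ : r₂ =o[𝓝 p₀] fun p : H × ℝ => p - p₀ := by
    rw [isLittleO_iff]
    intro ε' hε'
    have hcont : ContinuousAt Φ p₀ := hΦc.continuousAt (hS_open.mem_nhds (hmem x₀ hx₀ s₀))
    obtain ⟨δ, hδ, hδ'⟩ := Metric.continuousAt_iff.mp hcont ε' hε'
    have : ∀ᶠ p in 𝓝 p₀, dist p p₀ < δ := Metric.ball_mem_nhds p₀ hδ
    filter_upwards [this] with p hp
    have key : ∀ t ∈ Set.uIoc s₀ p.2, ‖Φ (p.1, t) - Φ p₀‖ ≤ ε' := by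
      intro t ht
      have ht' : |t - s₀| ≤ |p.2 - s₀| := abs_sub_left_of_mem_uIcc (uIoc_subset_uIcc ht)
      have hp1 : dist p.1 x₀ < δ ∧ dist p.2 s₀ < δ := by
        rw [Prod.dist_eq, max_lt_iff] at hp; exact hp
      have hd : dist (p.1, t) p₀ < δ := by
        rw [Prod.dist_eq]
        exact max_lt hp1.1
          (lt_of_le_of_lt (by rw [Real.dist_eq, Real.dist_eq]; exact ht') hp1.2)
      rw [← dist_eq_norm]
      exact le_of_lt (hδ' hd)
    calc ‖r₂ p‖ ≤ ε' * |p.2 - s₀| :=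
          intervalIntegral.norm_integral_le_of_norm_le_const key
    _ ≤ ε' * ‖p - p₀‖ := by
        apply mul_le_mul_of_nonneg_left _ (le_of_lt hε')
        show ‖p.2 - s₀‖ ≤ ‖p - p₀‖
        exact norm_snd_le (p - p₀)
  have heq : ∀ᶠ p in 𝓝 p₀,
      (∫ t in c..p.2, Φ (p.1, t)) - (∫ t in c..s₀, Φ (x₀, t))
        - ((A.comp (ContinuousLinearMap.fst ℝ H ℝ)
            + (ContinuousLinearMap.snd ℝ H ℝ).smulRight (Φ p₀)) (p - p₀))
      = r₁ p + r₂ p := by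
    have : ∀ᶠ p : H × ℝ in 𝓝 p₀, p.1 ∈ Ω :=
      continuous_fst.continuousAt.preimage_mem_nhds (hΩ_open.mem_nhds hx₀)
    filter_upwards [this] with p hp
    have hsplit : (∫ t in c..p.2, Φ (p.1, t))
        = (∫ t in c..s₀, Φ (p.1, t)) + ∫ t in s₀..p.2, Φ (p.1, t) :=
      (intervalIntegral.integral_add_adjacent_intervals
        (hslice_int p.1 hp c s₀) (hslice_int p.1 hp s₀ p.2)).symm
    have hsub : (∫ t in s₀..p.2, (Φ (p.1, t) - Φ p₀))
        = (∫ t in s₀..p.2, Φ (p.1, t)) - (p.2 - s₀) • Φ p₀ := by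
      rw [intervalIntegral.integral_sub (hslice_int p.1 hp s₀ p.2) intervalIntegrable_const,
        intervalIntegral.integral_const]
    have happ : (A.comp (ContinuousLinearMap.fst ℝ H ℝ)
            + (ContinuousLinearMap.snd ℝ H ℝ).smulRight (Φ p₀)) (p - p₀)
        = A (p.1 - x₀) + (p.2 - s₀) • Φ p₀ := by
      simp [ContinuousLinearMap.add_apply]
      rfl
    rw [happ, hsplit, hr₁, hr₂]
    simp only
    rw [hsub]
    abel
  exact Filter.EventuallyEq.trans_isLittleO heq (h₁.add h₂)



/-- **Lemma (ae1), smooth-competitor case.** The flux of a bounded divergence-free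
`C¹` vector field `φ = (φˣ, φᵗ)` on `Ω × ℝ` through the graph of a bounded `C¹`
function depends only on the boundary values: if `u − v` has compact support in `Ω`,
then the fluxes through the graphs of `u` and `v` coincide. -/
theorem statement_5 (n : ℕ)
    (Ω : Set (EuclideanSpace ℝ (Fin n))) (hΩ_open : IsOpen Ω)
    (hΩ_bdd : Bornology.IsBounded Ω)
    (φx : EuclideanSpace ℝ (Fin n) → ℝ → EuclideanSpace ℝ (Fin n))
    (φt : EuclideanSpace ℝ (Fin n) → ℝ → ℝ)
    (hφ_C1 : ContDiffOn ℝ 1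
      (fun p : EuclideanSpace ℝ (Fin n) × ℝ => (φx p.1 p.2, φt p.1 p.2))
      (Ω ×ˢ (Set.univ : Set ℝ)))
    (hφ_bdd : ∃ C : ℝ, ∀ x ∈ Ω, ∀ t : ℝ, ‖φx x t‖ ≤ C ∧ |φt x t| ≤ C)
    -- div φ = 0 on Ω × ℝ
    (hdiv : ∀ x ∈ Ω, ∀ t : ℝ,
      (∑ i : Fin n, fderiv ℝ (fun y => φx y t i) x (EuclideanSpace.single i 1))
        + deriv (fun s : ℝ => φt x s) t = 0)
    (u v : EuclideanSpace ℝ (Fin n) → ℝ)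
    (hu_C1 : ContDiffOn ℝ 1 u Ω) (hv_C1 : ContDiffOn ℝ 1 v Ω)
    (hu_bdd : ∃ C : ℝ, ∀ x ∈ Ω, |u x| ≤ C)
    (hv_bdd : ∃ C : ℝ, ∀ x ∈ Ω, |v x| ≤ C)
    -- u − v has compact support in Ω
    (hsupp : ∃ K : Set (EuclideanSpace ℝ (Fin n)), IsCompact K ∧ K ⊆ Ω ∧
      ∀ x ∈ Ω, x ∉ K → u x = v x) :
    ∫ x in Ω, (⟪φx x (u x), gradient u x⟫ - φt x (u x))
      = ∫ x in Ω, (⟪φx x (v x), gradient v x⟫ - φt x (v x)) := by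
  classical
  obtain ⟨K, hK_cpt, hKΩ, huv⟩ := hsupp
  have hΩmeas : MeasurableSet Ω := hΩ_open.measurableSet
  have hS_open : IsOpen (Ω ×ˢ (univ : Set ℝ)) := hΩ_open.prod isOpen_univ
  set Φ : (EuclideanSpace ℝ (Fin n)) × ℝ → (EuclideanSpace ℝ (Fin n)) := fun p => φx p.1 p.2 with hΦdef
  set τ : (EuclideanSpace ℝ (Fin n)) × ℝ → ℝ := fun p => φt p.1 p.2 with hτdef
  have hΦ : ContDiffOn ℝ 1 Φ (Ω ×ˢ (univ : Set ℝ)) := contDiff_fst.comp_contDiffOn hφ_C1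
  have hτ : ContDiffOn ℝ 1 τ (Ω ×ˢ (univ : Set ℝ)) := contDiff_snd.comp_contDiffOn hφ_C1
  have hmemS : ∀ x ∈ Ω, ∀ t : ℝ, (x, t) ∈ Ω ×ˢ (univ : Set ℝ) := fun x hx t => ⟨hx, trivial⟩
  have hΦc : ContinuousOn Φ (Ω ×ˢ (univ : Set ℝ)) := hΦ.continuousOn
  have hτc : ContinuousOn τ (Ω ×ˢ (univ : Set ℝ)) := hτ.continuousOn
  have hΦ' : ContinuousOn (fderiv ℝ Φ) (Ω ×ˢ (univ : Set ℝ)) :=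
    hΦ.continuousOn_fderiv_of_isOpen hS_open le_rfl
  have hτ' : ContinuousOn (fderiv ℝ τ) (Ω ×ˢ (univ : Set ℝ)) :=
    hτ.continuousOn_fderiv_of_isOpen hS_open le_rfl
  have hΦdiffAt : ∀ p ∈ Ω ×ˢ (univ : Set ℝ), HasFDerivAt Φ (fderiv ℝ Φ p) p := fun p hp =>
    ((hΦ.contDiffAt (hS_open.mem_nhds hp)).differentiableAt one_ne_zero).hasFDerivAt
  have hτdiffAt : ∀ p ∈ Ω ×ˢ (univ : Set ℝ), HasFDerivAt τ (fderiv ℝ τ p) p := fun p hp =>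
    ((hτ.contDiffAt (hS_open.mem_nhds hp)).differentiableAt one_ne_zero).hasFDerivAt
  have hu_diff : ∀ x ∈ Ω, HasFDerivAt u (fderiv ℝ u x) x := fun x hx =>
    ((hu_C1.contDiffAt (hΩ_open.mem_nhds hx)).differentiableAt one_ne_zero).hasFDerivAt
  have hv_diff : ∀ x ∈ Ω, HasFDerivAt v (fderiv ℝ v x) x := fun x hx =>
    ((hv_C1.contDiffAt (hΩ_open.mem_nhds hx)).differentiableAt one_ne_zero).hasFDerivAt
  set B : (EuclideanSpace ℝ (Fin n)) → ℝ → ((EuclideanSpace ℝ (Fin n)) →L[ℝ] (EuclideanSpace ℝ (Fin n))) := fun x t =>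
    (fderiv ℝ Φ (x, t)).comp ((ContinuousLinearMap.id ℝ (EuclideanSpace ℝ (Fin n))).prod 0) with hBdef
  have hBx : ∀ x ∈ Ω, ∀ t : ℝ, HasFDerivAt (fun y => Φ (y, t)) (B x t) x := fun x hx t => by
    exact (hΦdiffAt (x, t) (hmemS x hx t)).comp (f := fun y => (y, t)) x ((hasFDerivAt_id x).prodMk (hasFDerivAt_const t x))
  have hBcont : ∀ x ∈ Ω, Continuous (fun t => B x t) := by
    intro x hx
    apply Continuous.clm_comp _ continuous_const
    rw [← continuousOn_univ]
    exact hΦ'.comp ((continuous_const.prodMk continuous_id).continuousOn)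
      (fun t _ => hmemS x hx t)
  have hslice_cont : ∀ x ∈ Ω, Continuous (fun t => Φ (x, t)) := by
    intro x hx
    rw [← continuousOn_univ]
    exact hΦc.comp ((continuous_const.prodMk continuous_id).continuousOn)
      (fun t _ => hmemS x hx t)
  -- the compactly supported vector field
  set G : (EuclideanSpace ℝ (Fin n)) → (EuclideanSpace ℝ (Fin n)) := fun x =>
    if x ∈ Ω then (∫ t in (0:ℝ)..u x, Φ (x, t)) - (∫ t in (0:ℝ)..v x, Φ (x, t)) else 0
    with hGdef
  have hG0 : ∀ x ∉ K, ∀ᶠ y in 𝓝 x, G y = 0 := by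
    intro x hxK
    filter_upwards [hK_cpt.isClosed.isOpen_compl.mem_nhds hxK] with y hy
    by_cases hyΩ : y ∈ Ω
    · simp only [hGdef, if_pos hyΩ, huv y hyΩ hy, sub_self]
    · simp only [hGdef, if_neg hyΩ]
  set Dfun : (EuclideanSpace ℝ (Fin n)) → ((EuclideanSpace ℝ (Fin n)) →L[ℝ] (EuclideanSpace ℝ (Fin n))) := fun x =>
    ((((∫ t in (0:ℝ)..u x, B x t).comp (ContinuousLinearMap.fst ℝ (EuclideanSpace ℝ (Fin n)) ℝ))
        + (ContinuousLinearMap.snd ℝ (EuclideanSpace ℝ (Fin n)) ℝ).smulRight (Φ (x, u x))).comp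
      ((ContinuousLinearMap.id ℝ (EuclideanSpace ℝ (Fin n))).prod (fderiv ℝ u x)))
    - ((((∫ t in (0:ℝ)..v x, B x t).comp (ContinuousLinearMap.fst ℝ (EuclideanSpace ℝ (Fin n)) ℝ))
        + (ContinuousLinearMap.snd ℝ (EuclideanSpace ℝ (Fin n)) ℝ).smulRight (Φ (x, v x))).comp
      ((ContinuousLinearMap.id ℝ (EuclideanSpace ℝ (Fin n))).prod (fderiv ℝ v x))) with hDdef
  have hGdiffΩ : ∀ x ∈ Ω, HasFDerivAt G (Dfun x) x := by
    intro x hx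
    have h1 := (hasFDerivAt_parametric_intervalIntegral hΩ_open hΦ hx (u x) 0).comp x
      ((hasFDerivAt_id x).prodMk (hu_diff x hx))
    have h2 := (hasFDerivAt_parametric_intervalIntegral hΩ_open hΦ hx (v x) 0).comp x
      ((hasFDerivAt_id x).prodMk (hv_diff x hx))
    have h3 := h1.sub h2
    refine h3.congr_of_eventuallyEq ?_
    filter_upwards [hΩ_open.mem_nhds hx] with y hy
    simp only [hGdef, if_pos hy, Function.comp, id_eq, Pi.sub_apply, Function.comp_apply]
  have hGdiffAll : ∀ x, DifferentiableAt ℝ G x := by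
    intro x
    by_cases hxK : x ∈ K
    · exact (hGdiffΩ x (hKΩ hxK)).differentiableAt
    · exact (differentiableAt_const (0 : (EuclideanSpace ℝ (Fin n)))).congr_of_eventuallyEq (hG0 x hxK)
  have hfderivΩ : ∀ x ∈ Ω, fderiv ℝ G x = Dfun x := fun x hx => (hGdiffΩ x hx).fderiv
  have hfderiv0 : ∀ x ∉ K, fderiv ℝ G x = 0 := by
    intro x hxK
    exact (((hasFDerivAt_const (0 : (EuclideanSpace ℝ (Fin n))) x)).congr_of_eventuallyEq (hG0 x hxK)).fderiv
  set divG : (EuclideanSpace ℝ (Fin n)) → ℝ := fun x => ∑ i, fderiv ℝ G x (EuclideanSpace.single i 1) i with hdivGdef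
  have hdivG0 : ∀ x ∉ K, divG x = 0 := by
    intro x hxK
    simp [hdivGdef, hfderiv0 x hxK]
  set fu : (EuclideanSpace ℝ (Fin n)) → ℝ := fun x => ⟪φx x (u x), gradient u x⟫ - φt x (u x) with hfudef
  set fv : (EuclideanSpace ℝ (Fin n)) → ℝ := fun x => ⟪φx x (v x), gradient v x⟫ - φt x (v x) with hfvdef
  -- the pointwise Leibniz identity
  have hkey : ∀ x ∈ Ω, fu x - fv x = divG x := by
    intro x hx
    have hBint : ∀ c d : ℝ, IntervalIntegrable (fun t => B x t) volume c d :=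
      fun c d => (hBcont x hx).intervalIntegrable c d
    have hBi_cont : ∀ i : Fin n,
        Continuous (fun t => (B x t) (EuclideanSpace.single i 1)) :=
      fun i => (hBcont x hx).clm_apply continuous_const
    have hBii_cont : ∀ i : Fin n,
        Continuous (fun t => (B x t) (EuclideanSpace.single i 1) i) :=
      fun i => (EuclideanSpace.proj i).continuous.comp (hBi_cont i)
    have hIapp : ∀ (c d : ℝ) (i : Fin n),
        (∫ t in c..d, B x t) (EuclideanSpace.single i 1) i
          = ∫ t in c..d, ((B x t) (EuclideanSpace.single i 1) i) := by
      intro c d i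
      calc (∫ t in c..d, B x t) (EuclideanSpace.single i 1) i
          = (EuclideanSpace.proj i) ((∫ t in c..d, B x t) (EuclideanSpace.single i 1)) := rfl
        _ = (EuclideanSpace.proj i) (∫ t in c..d, (B x t) (EuclideanSpace.single i 1)) := by
            rw [ContinuousLinearMap.intervalIntegral_apply (hBint c d)]
        _ = ∫ t in c..d, (EuclideanSpace.proj i) ((B x t) (EuclideanSpace.single i 1)) :=
            ((EuclideanSpace.proj i).intervalIntegral_comp_comm
              ((hBi_cont i).intervalIntegrable c d)).symm
        _ = ∫ t in c..d, ((B x t) (EuclideanSpace.single i 1) i) := rfl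
    have hBdiv : ∀ t : ℝ,
        (∑ i, (B x t) (EuclideanSpace.single i 1) i) = - deriv (fun s => φt x s) t := by
      intro t
      have h1 : ∀ i : Fin n, fderiv ℝ (fun y => φx y t i) x
          = (EuclideanSpace.proj i).comp (B x t) := by
        intro i
        refine HasFDerivAt.fderiv ?_
        exact (EuclideanSpace.proj i).hasFDerivAt.comp x (hBx x hx t)
      have h2 := hdiv x hx t
      have h3 : ∑ i : Fin n, fderiv ℝ (fun y => φx y t i) x (EuclideanSpace.single i 1)
          = ∑ i, (B x t) (EuclideanSpace.single i 1) i := by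
        refine Finset.sum_congr rfl (fun i _ => ?_)
        rw [h1 i]; rfl
      rw [← h3]; linarith
    have hτsliceAt : ∀ t : ℝ, HasDerivAt (fun s => φt x s)
        ((fderiv ℝ τ (x, t)) ((0 : (EuclideanSpace ℝ (Fin n))), (1 : ℝ))) t := by
      intro t
      exact (hτdiffAt (x, t) (hmemS x hx t)).comp_hasDerivAt t
        ((hasDerivAt_const t x).prodMk (hasDerivAt_id t))
    have hderiv_eq : deriv (fun s => φt x s)
        = fun t => (fderiv ℝ τ (x, t)) ((0 : (EuclideanSpace ℝ (Fin n))), 1) :=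
      funext fun t => (hτsliceAt t).deriv
    have hτ'cont : Continuous fun t =>
        (fderiv ℝ τ (x, t)) ((0 : (EuclideanSpace ℝ (Fin n))), (1 : ℝ)) := by
      apply Continuous.clm_apply _ continuous_const
      rw [← continuousOn_univ]
      exact hτ'.comp ((continuous_const.prodMk continuous_id).continuousOn)
        (fun t _ => hmemS x hx t)
    have hFTC : ∫ t in v x..u x, deriv (fun s => φt x s) t = φt x (u x) - φt x (v x) := by
      refine intervalIntegral.integral_eq_sub_of_hasDerivAt (fun t _ => ?_) ?_
      · rw [show deriv (fun s => φt x s) t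
            = (fderiv ℝ τ (x, t)) ((0 : (EuclideanSpace ℝ (Fin n))), 1) from (hτsliceAt t).deriv]
        exact hτsliceAt t
      · rw [hderiv_eq]
        exact hτ'cont.intervalIntegrable _ _
    have hgrad : ∀ (w : (EuclideanSpace ℝ (Fin n)) → ℝ) (a : (EuclideanSpace ℝ (Fin n))),
        ⟪a, gradient w x⟫ = fderiv ℝ w x a := by
      intro w a
      rw [real_inner_comm]
      exact InnerProductSpace.toDual_symm_apply
    have hexp : ∀ (ℓ : (EuclideanSpace ℝ (Fin n)) →L[ℝ] ℝ) (a : (EuclideanSpace ℝ (Fin n))),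
        ℓ a = ∑ i, (ℓ (EuclideanSpace.single i 1)) * a i := by
      intro ℓ a
      have hb := (EuclideanSpace.basisFun (Fin n) ℝ).sum_repr a
      calc ℓ a = ℓ (∑ i, a i • EuclideanSpace.single i 1) := by
            conv_lhs => rw [← hb]
            congr 1
            refine Finset.sum_congr rfl (fun i _ => ?_)
            rw [EuclideanSpace.basisFun_repr, EuclideanSpace.basisFun_apply]
        _ = ∑ i, a i • ℓ (EuclideanSpace.single i 1) := by
            rw [map_sum]
            exact Finset.sum_congr rfl (fun i _ => by rw [ContinuousLinearMap.map_smul])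
        _ = ∑ i, (ℓ (EuclideanSpace.single i 1)) * a i := by
            exact Finset.sum_congr rfl (fun i _ => by rw [smul_eq_mul, mul_comm])
    -- expand the divergence of G
    have hDi : ∀ i : Fin n, Dfun x (EuclideanSpace.single i 1) i
        = (((∫ t in (0:ℝ)..u x, B x t) (EuclideanSpace.single i 1) i)
            + fderiv ℝ u x (EuclideanSpace.single i 1) * (Φ (x, u x)) i)
          - (((∫ t in (0:ℝ)..v x, B x t) (EuclideanSpace.single i 1) i)
            + fderiv ℝ v x (EuclideanSpace.single i 1) * (Φ (x, v x)) i) := by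
      intro i
      simp only [hDdef, ContinuousLinearMap.sub_apply, ContinuousLinearMap.comp_apply,
        ContinuousLinearMap.add_apply, ContinuousLinearMap.smulRight_apply,
        ContinuousLinearMap.prod_apply, ContinuousLinearMap.id_apply,
        ContinuousLinearMap.coe_fst', ContinuousLinearMap.coe_snd',
        PiLp.sub_apply, PiLp.add_apply, PiLp.smul_apply, smul_eq_mul]
    have hAu : ∀ c : ℝ, ∑ i, (∫ t in (0:ℝ)..c, B x t) (EuclideanSpace.single i 1) i
        = ∫ t in (0:ℝ)..c, (∑ i, (B x t) (EuclideanSpace.single i 1) i) := by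
      intro c
      calc ∑ i, (∫ t in (0:ℝ)..c, B x t) (EuclideanSpace.single i 1) i
          = ∑ i, ∫ t in (0:ℝ)..c, ((B x t) (EuclideanSpace.single i 1) i) :=
            Finset.sum_congr rfl (fun i _ => hIapp 0 c i)
        _ = ∫ t in (0:ℝ)..c, (∑ i, (B x t) (EuclideanSpace.single i 1) i) :=
            (intervalIntegral.integral_finset_sum
              (fun i _ => (hBii_cont i).intervalIntegrable _ _)).symm
    have hsumdiv : Continuous (fun t => ∑ i, (B x t) (EuclideanSpace.single i 1) i) :=
      continuous_finset_sum _ (fun i _ => hBii_cont i)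
    have hsub : (∫ t in (0:ℝ)..u x, (∑ i, (B x t) (EuclideanSpace.single i 1) i))
        - (∫ t in (0:ℝ)..v x, (∑ i, (B x t) (EuclideanSpace.single i 1) i))
        = ∫ t in v x..u x, (∑ i, (B x t) (EuclideanSpace.single i 1) i) :=
      intervalIntegral.integral_interval_sub_left
        (hsumdiv.intervalIntegrable _ _) (hsumdiv.intervalIntegrable _ _)
    have hmain : ∫ t in v x..u x, (∑ i, (B x t) (EuclideanSpace.single i 1) i)
        = -(φt x (u x) - φt x (v x)) := by
      rw [intervalIntegral.integral_congr (fun t _ => hBdiv t), intervalIntegral.integral_neg,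
        hFTC]
    simp only [hdivGdef, hfudef, hfvdef, hfderivΩ x hx]
    rw [Finset.sum_congr rfl (fun i _ => hDi i), Finset.sum_sub_distrib,
      Finset.sum_add_distrib, Finset.sum_add_distrib, hAu (u x), hAu (v x)]
    rw [hgrad u (φx x (u x)), hgrad v (φx x (v x)),
      hexp (fderiv ℝ u x) (φx x (u x)), hexp (fderiv ℝ v x) (φx x (v x))]
    have : (Φ (x, u x)) = φx x (u x) := rfl
    have h2 : (Φ (x, v x)) = φx x (v x) := rfl
    rw [this, h2] at *
    have := hsub
    have h3 := hmain
    linarith [hsub, hmain]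
  -- continuity of the integrands
  have hcont_gen : ∀ w : (EuclideanSpace ℝ (Fin n)) → ℝ, ContDiffOn ℝ 1 w Ω →
      ContinuousOn (fun x => ⟪φx x (w x), gradient w x⟫ - φt x (w x)) Ω := by
    intro w hw
    have hgu : ContinuousOn (fun x => ((x, w x) : (EuclideanSpace ℝ (Fin n)) × ℝ)) Ω :=
      continuousOn_id.prodMk hw.continuousOn
    have hmap : ∀ x ∈ Ω, ((x, w x) : (EuclideanSpace ℝ (Fin n)) × ℝ) ∈ Ω ×ˢ (univ : Set ℝ) :=
      fun x hx => hmemS x hx (w x)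
    have c1 : ContinuousOn (fun x => Φ (x, w x)) Ω := hΦc.comp hgu hmap
    have c2 : ContinuousOn (fun x => gradient w x) Ω := by
      have hfd : ContinuousOn (fderiv ℝ w) Ω := hw.continuousOn_fderiv_of_isOpen hΩ_open le_rfl
      exact ((InnerProductSpace.toDual ℝ (EuclideanSpace ℝ (Fin n))).symm.continuous.comp_continuousOn hfd)
    have c3 : ContinuousOn (fun x => τ (x, w x)) Ω := hτc.comp hgu hmap
    exact (c1.inner c2).sub c3
  have hfu_cont : ContinuousOn fu Ω := hcont_gen u hu_C1
  have hfv_cont : ContinuousOn fv Ω := hcont_gen v hv_C1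
  -- integrability of the divergence
  have hdivG_contK : ContinuousOn divG K := by
    refine ((hfu_cont.sub hfv_cont).mono hKΩ).congr ?_
    intro x hx
    exact (hkey x (hKΩ hx)).symm
  have hdivG_intK : IntegrableOn divG K := hdivG_contK.integrableOn_compact hK_cpt
  have hdivG_intΩ : IntegrableOn divG Ω := by
    have h1 : IntegrableOn divG (Ω \ K) := by
      refine (integrableOn_zero).congr_fun (fun x hx => (hdivG0 x hx.2).symm)
        (hΩmeas.diff hK_cpt.isClosed.measurableSet)
    exact ((hdivG_intK.union h1).mono_set (fun x hx => by
      by_cases hxK : x ∈ K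
      · exact Or.inl hxK
      · exact Or.inr ⟨hx, hxK⟩))
  have hdiv_zero : ∫ x in Ω, divG x = 0 := by
    have hΩzero : ∀ x ∉ Ω, divG x = 0 := fun x hx => hdivG0 x (fun hK => hx (hKΩ hK))
    have hGzero : ∀ x ∉ K, G x = 0 := fun x hx => (hG0 x hx).self_of_nhds
    rw [setIntegral_eq_integral_of_forall_compl_eq_zero hΩzero]
    cases n with
    | zero =>
      have : divG = fun _ => (0 : ℝ) := by
        funext x
        simp [hdivGdef]
      rw [this, integral_zero]
    | succ m =>
      -- bound the support
      obtain ⟨R₀, hR₀⟩ := hK_cpt.isBounded.subset_closedBall 0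
      set R : ℝ := max R₀ 0 with hRdef
      have hRnn : (0:ℝ) ≤ R := le_max_right _ _
      have hKball : K ⊆ Metric.closedBall 0 R :=
        hR₀.trans (Metric.closedBall_subset_closedBall (le_max_left _ _))
      have hcoord : ∀ z : EuclideanSpace ℝ (Fin (m+1)), ∀ i, |z i| ≤ ‖z‖ := by
        intro z i
        rw [EuclideanSpace.norm_eq, ← Real.sqrt_sq_eq_abs]
        apply Real.sqrt_le_sqrt
        have : |z i| ^ 2 ≤ ∑ j, ‖z j‖ ^ 2 := by
          have := Finset.single_le_sum (f := fun j => ‖z j‖ ^ 2)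
            (fun j _ => sq_nonneg _) (Finset.mem_univ i)
          simpa [Real.norm_eq_abs, sq_abs] using this
        simpa [sq_abs] using this
      have hKcoord : ∀ z ∈ K, ∀ i, |z i| ≤ R := by
        intro z hz i
        refine (hcoord z i).trans ?_
        simpa using Metric.mem_closedBall.mp (hKball hz)
      -- transfer to the pi space
      set ι : (Fin (m+1) → ℝ) → EuclideanSpace ℝ (Fin (m+1)) :=
        fun z => (WithLp.equiv 2 (Fin (m+1) → ℝ)).symm z with hιdef
      set eqv := EuclideanSpace.equiv (Fin (m+1)) ℝ with heqv
      set g : (Fin (m+1) → ℝ) → (Fin (m+1) → ℝ) := fun z => eqv (G (ι z)) with hgdef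
      set g' : (Fin (m+1) → ℝ) → (Fin (m+1) → ℝ) →L[ℝ] (Fin (m+1) → ℝ) := fun z =>
        ((eqv.toContinuousLinearMap.comp (fderiv ℝ G (ι z))).comp
          (eqv.symm.toContinuousLinearMap)) with hg'def
      have hg : ∀ z, HasFDerivAt g (g' z) z := by
        intro z
        have h1 := (hGdiffAll (ι z)).hasFDerivAt
        have h2 : HasFDerivAt (fun w : Fin (m+1) → ℝ => ι w)
            (eqv.symm.toContinuousLinearMap) z := eqv.symm.hasFDerivAt
        have h3 := h1.comp z h2
        exact (eqv.toContinuousLinearMap.hasFDerivAt).comp z h3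
      have hdiv_match : ∀ z, (∑ i, g' z (Pi.single i 1) i) = divG (ι z) := by
        intro z
        simp only [hdivGdef]
        exact Finset.sum_congr rfl (fun i _ => rfl)
      set K' : Set (Fin (m+1) → ℝ) := ι ⁻¹' K with hK'def
      have hK'img : K' = eqv '' K := by
        rw [eqv.image_eq_preimage_symm]
        rfl
      have hK'cpt : IsCompact K' := by
        rw [hK'img]; exact hK_cpt.image eqv.continuous
      have hK'meas : MeasurableSet K' := hK'cpt.isClosed.measurableSet
      set a : Fin (m+1) → ℝ := fun _ => -(R+1) with hadef
      set b : Fin (m+1) → ℝ := fun _ => (R+1) with hbdef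
      have hab : a ≤ b := fun i => by simp [hadef, hbdef]; linarith
      have hK'Icc : K' ⊆ Icc a b := by
        intro z hz
        have hzi : ∀ i, (ι z) i = z i := fun i => rfl
        constructor
        · intro i
          have h := (abs_le.mp (hKcoord (ι z) hz i)).1
          rw [hzi i] at h
          show -(R+1) ≤ z i
          linarith
        · intro i
          have h := (abs_le.mp (hKcoord (ι z) hz i)).2
          rw [hzi i] at h
          show z i ≤ R+1
          linarith
      have hGcont : Continuous G :=
        continuous_iff_continuousAt.mpr (fun x => (hGdiffAll x).continuousAt)
      -- integrability of the divergence on the box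
      have hInd : (fun z => divG (ι z)) = K'.indicator (fun z => divG (ι z)) := by
        funext z
        by_cases hz : z ∈ K'
        · rw [Set.indicator_of_mem hz]
        · rw [Set.indicator_of_notMem hz]
          exact hdivG0 (ι z) hz
      have hIi : IntegrableOn (fun z => divG (ι z)) (Icc a b) := by
        rw [hInd]
        apply Integrable.integrableOn
        apply IntegrableOn.integrable_indicator _ hK'meas
        apply ContinuousOn.integrableOn_compact hK'cpt
        exact hdivG_contK.comp eqv.symm.continuous.continuousOn (fun z hz => hz)
      have hIi' : IntegrableOn (fun z => ∑ i, g' z (Pi.single i 1) i) (Icc a b) := by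
        refine hIi.congr_fun (fun z _ => (hdiv_match z).symm) measurableSet_Icc
      -- apply the divergence theorem
      have hDT := MeasureTheory.integral_divergence_of_hasFDerivAt_off_countable
        a b hab g g' ∅ countable_empty
        ((eqv.continuous.comp (hGcont.comp eqv.symm.continuous)).continuousOn)
        (fun z hz => hg z) hIi'
      -- all boundary integrals vanish
      have hfaces : ∀ (i : Fin (m+1)) (c : ℝ), |c| = R + 1 →
          ∀ y : Fin m → ℝ, g (i.insertNth c y) i = 0 := by
        intro i c hc y
        have hnotK : ι (i.insertNth c y) ∉ K := by
          intro hmem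
          have h := hKcoord _ hmem i
          have h0 : (ι (i.insertNth c y)) i = (i.insertNth c y : Fin (m+1) → ℝ) i := rfl
          have hv : (ι (i.insertNth c y)) i = c := by rw [h0]; simp
          rw [hv, hc] at h
          linarith
        simp only [hgdef]
        rw [hGzero _ hnotK]
        rfl
      have hRHS : ∑ i : Fin (m+1),
          ((∫ x in Icc (a ∘ i.succAbove) (b ∘ i.succAbove), g (i.insertNth (b i) x) i)
            - ∫ x in Icc (a ∘ i.succAbove) (b ∘ i.succAbove), g (i.insertNth (a i) x) i)
          = 0 := by
        apply Finset.sum_eq_zero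
        intro i _
        have h1 : ∀ x, g (i.insertNth (b i) x) i = 0 := by
          intro x
          exact hfaces i (b i) (by simp [hbdef]; linarith) x
        have h2 : ∀ x, g (i.insertNth (a i) x) i = 0 := by
          intro x
          exact hfaces i (a i) (by simp [hadef]; rw [abs_of_nonpos (by linarith)]; ring) x
        simp only [h1, h2, integral_zero, sub_self]
      rw [hRHS] at hDT
      -- transfer the integral back
      have hvol := (EuclideanSpace.volume_preserving_symm_measurableEquiv_toLp (Fin (m+1))).symm
      have htrans : ∫ x, divG x = ∫ z, divG (ι z) := by
        exact (hvol.integral_comp (MeasurableEquiv.toLp 2 (Fin (m+1) → ℝ)).symm.symm.measurableEmbedding divG).symm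
      rw [htrans]
      have hzero_out : ∀ z ∉ Icc a b, divG (ι z) = 0 := by
        intro z hz
        apply hdivG0
        intro hmem
        exact hz (hK'Icc hmem)
      rw [← setIntegral_eq_integral_of_forall_compl_eq_zero hzero_out]
      rw [setIntegral_congr_fun measurableSet_Icc (fun z _ => (hdiv_match z).symm)]
      exact hDT
  -- conclude
  by_cases hInt : IntegrableOn fu Ω
  · have hIntv : IntegrableOn fv Ω := by
      refine IntegrableOn.congr_fun (hInt.sub hdivG_intΩ) (fun x hx => ?_) hΩmeas
      simp only [Pi.sub_apply]
      rw [← hkey x hx]; ring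
    have : (∫ x in Ω, fu x) - ∫ x in Ω, fv x = 0 := by
      rw [← integral_sub hInt hIntv, ← hdiv_zero]
      exact setIntegral_congr_fun hΩmeas (fun x hx => hkey x hx)
    linarith
  · have hIntv : ¬ IntegrableOn fv Ω := by
      intro h
      refine hInt (IntegrableOn.congr_fun (h.add hdivG_intΩ) (fun x hx => ?_) hΩmeas)
      simp only [Pi.add_apply]
      rw [← hkey x hx]; ring
    rw [integral_undef hInt, integral_undef hIntv]
end

section
/- Let a>0, λ>0, α>0, let u(x):=λx on (0,a), and let U:={(x,t)∈(0,a)×ℝ : λx−α/(4λ) < t < λx+α/(4λ)}. Then F^α(u)=aλ² ≤ F^α(v) for every v piecewise C¹ with finite jump set on (0,a) such that v(0+)=0, v(a−)=λa, and the graph Γ_v is contained in U (i.e. λx−α/(4λ) < v⁻(x) ≤ v⁺(x) < λx+α/(4λ) for all x). In particular u is a Dirichlet U-minimizer of F^α even when aλ² > α. -/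
open MeasureTheory Set Filter

/-- The homogeneous one-dimensional Mumford–Shah functional
`F^α(v) = ∫₀ᵃ |v'|² dx + α card S_v`. -/
noncomputable def MS0 (a α : ℝ) (v : PiecewiseC1 a) : ℝ :=
  (∫ x in Set.Ioo 0 a, (v.f' x) ^ 2) + α * (v.S.card : ℝ)



section AuxExample1

lemma extend_cont {b c L M : ℝ} {f : ℝ → ℝ} (hbc : b < c)
    (hf : ContinuousOn f (Ioo b c))
    (hL : Tendsto f (nhdsWithin b (Ioi b)) (nhds L))
    (hM : Tendsto f (nhdsWithin c (Iio c)) (nhds M)) :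
    ∃ g : ℝ → ℝ, ContinuousOn g (Icc b c) ∧ EqOn f g (Ioo b c) ∧ g b = L ∧ g c = M := by
  set g : ℝ → ℝ := fun x => if x ≤ b then L else if c ≤ x then M else f x with hg
  have hgb : g b = L := by simp [hg]
  have hgc : g c = M := by simp [hg, not_le.2 hbc]
  have heq : EqOn f g (Ioo b c) := fun x hx => by
    simp only [hg, if_neg (not_le.2 hx.1), if_neg (not_le.2 hx.2)]
  refine ⟨g, ?_, heq, hgb, hgc⟩
  intro x hx
  rcases eq_or_lt_of_le hx.1 with h1 | h1
  · -- x = b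
    rw [← h1] at hx ⊢
    unfold ContinuousWithinAt
    rw [hgb, nhdsWithin_Icc_eq_nhdsGE hbc,
      show Ici b = insert b (Ioi b) from Set.Ioi_insert.symm, nhdsWithin_insert,
      tendsto_sup]
    constructor
    · rw [hgb.symm]; exact tendsto_pure_nhds g b
    · refine hL.congr' ?_
      filter_upwards [Ioo_mem_nhdsGT_of_mem ⟨le_refl b, hbc⟩] with y hy
      exact heq hy
  rcases eq_or_lt_of_le hx.2 with h2 | h2
  · -- x = c
    rw [h2] at h1 ⊢
    unfold ContinuousWithinAt
    rw [hgc, nhdsWithin_Icc_eq_nhdsLE hbc,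
      show Iic c = insert c (Iio c) from Set.Iio_insert.symm, nhdsWithin_insert,
      tendsto_sup]
    constructor
    · rw [hgc.symm]; exact tendsto_pure_nhds g c
    · refine hM.congr' ?_
      filter_upwards [Ioo_mem_nhdsLT_of_mem ⟨hbc, le_refl c⟩] with y hy
      exact heq hy
  · -- interior
    have hev : f =ᶠ[nhds x] g := by
      filter_upwards [Ioo_mem_nhds h1 h2] with y hy using heq hy
    exact ((hf.continuousAt (Ioo_mem_nhds h1 h2)).congr hev).continuousWithinAt

lemma piece_lemma {b c L M : ℝ} {f f' : ℝ → ℝ} (hbc : b < c)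
    (hderiv : ∀ x ∈ Ioo b c, HasDerivAt f (f' x) x)
    (hcont : ContinuousOn f' (Ioo b c))
    (hL : Tendsto f (nhdsWithin b (Ioi b)) (nhds L))
    (hM : Tendsto f (nhdsWithin c (Iio c)) (nhds M))
    (hLb : ∃ l, Tendsto f' (nhdsWithin b (Ioi b)) (nhds l))
    (hLc : ∃ l, Tendsto f' (nhdsWithin c (Iio c)) (nhds l)) :
    IntegrableOn f' (Ioo b c) ∧ IntegrableOn (fun x => f' x ^ 2) (Ioo b c) ∧
      ∫ x in Ioo b c, f' x = M - L := by
  obtain ⟨lb, hlb⟩ := hLb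
  obtain ⟨lc, hlc⟩ := hLc
  obtain ⟨g', hg'cont, hg'eq, -, -⟩ := extend_cont hbc hcont hlb hlc
  have hint : IntegrableOn f' (Ioo b c) := by
    refine (IntegrableOn.congr_fun ?_ (fun x hx => (hg'eq hx).symm) measurableSet_Ioo)
    exact (hg'cont.integrableOn_compact isCompact_Icc).mono_set Ioo_subset_Icc_self
  have hint2 : IntegrableOn (fun x => f' x ^ 2) (Ioo b c) := by
    refine (IntegrableOn.congr_fun ?_ (fun x hx => by rw [hg'eq hx]) measurableSet_Ioo)
    exact (((hg'cont.pow 2)).integrableOn_compact isCompact_Icc).mono_set Ioo_subset_Icc_self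
  refine ⟨hint, hint2, ?_⟩
  have hfc : ContinuousOn f (Ioo b c) := fun x hx => (hderiv x hx).continuousAt.continuousWithinAt
  obtain ⟨g, hgcont, hgeq, hgb, hgc⟩ := extend_cont hbc hfc hL hM
  have hgderiv : ∀ x ∈ Ioo b c, HasDerivWithinAt g (f' x) (Ioi x) x := by
    intro x hx
    have hev : f =ᶠ[nhds x] g := by
      filter_upwards [Ioo_mem_nhds hx.1 hx.2] with y hy using hgeq hy
    exact ((hderiv x hx).congr_of_eventuallyEq hev.symm).hasDerivWithinAt
  have hii : IntervalIntegrable f' volume b c := by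
    rw [intervalIntegrable_iff_integrableOn_Ioo_of_le hbc.le]
    exact hint
  have := intervalIntegral.integral_eq_sub_of_hasDeriv_right_of_le hbc.le hgcont hgderiv hii
  rw [hgb, hgc] at this
  rw [← this, intervalIntegral.integral_of_le hbc.le,
    ← MeasureTheory.integral_Ioc_eq_integral_Ioo]

/-- restriction of a piecewise C¹ function on (0,a) to (0,m), m ∈ Ioo 0 a, m = max of S -/
noncomputable def PiecewiseC1.restrict {a : ℝ} (v : PiecewiseC1 a) (m : ℝ) (hm : m ∈ Set.Ioo 0 a)
    (hmax : ∀ x ∈ v.S, x ≤ m) : PiecewiseC1 m where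
  f := v.f
  f' := v.f'
  S := v.S.erase m
  limL := v.limL
  limR := v.limR
  S_sub := by
    intro x hx
    have hxS := Finset.mem_of_mem_erase hx
    have := v.S_sub x hxS
    exact ⟨this.1, lt_of_le_of_ne (hmax x hxS) (Finset.ne_of_mem_erase hx)⟩
  hasDeriv := by
    intro x hx
    refine v.hasDeriv x ⟨⟨hx.1.1, hx.1.2.trans hm.2⟩, fun hxS => hx.2 ?_⟩
    exact Finset.mem_coe.2 (Finset.mem_erase.2 ⟨ne_of_lt hx.1.2, hxS⟩)
  derivCont := by
    refine v.derivCont.mono ?_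
    intro x hx
    exact ⟨⟨hx.1.1, hx.1.2.trans hm.2⟩, fun hxS => hx.2
      (Finset.mem_coe.2 (Finset.mem_erase.2 ⟨ne_of_lt hx.1.2, hxS⟩))⟩
  tendsto_limL := fun x hx => v.tendsto_limL x ⟨hx.1, hx.2.trans hm.2.le⟩
  tendsto_limR := fun x hx => v.tendsto_limR x ⟨hx.1, hx.2.trans hm.2⟩
  jump_iff := by
    intro x hx
    rw [v.jump_iff x ⟨hx.1, hx.2.trans hm.2⟩, Finset.mem_erase]
    exact ⟨fun h => ⟨ne_of_lt hx.2, h⟩, fun h => h.2⟩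
  deriv_limL := fun x hx => v.deriv_limL x ⟨hx.1, hx.2.trans hm.2.le⟩
  deriv_limR := fun x hx => v.deriv_limR x ⟨hx.1, hx.2.trans hm.2⟩

lemma key_lemma : ∀ (n : ℕ) (a : ℝ), 0 < a → ∀ v : PiecewiseC1 a, v.S.card = n →
    IntegrableOn v.f' (Ioo 0 a) ∧ IntegrableOn (fun x => v.f' x ^ 2) (Ioo 0 a) ∧
    ∫ x in Ioo 0 a, v.f' x
      = v.limL a - v.limR 0 - ∑ x ∈ v.S, (v.limR x - v.limL x) := by
  intro n
  induction n with
  | zero =>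
    intro a ha v hcard
    have hS : v.S = ∅ := Finset.card_eq_zero.1 hcard
    have hsub : Set.Ioo 0 a ⊆ Set.Ioo 0 a \ (v.S : Set ℝ) := by
      simp [hS]
    have := piece_lemma ha (fun x hx => v.hasDeriv x (hsub hx)) (v.derivCont.mono hsub)
      (v.tendsto_limR 0 ⟨le_refl 0, ha⟩) (v.tendsto_limL a ⟨ha, le_refl a⟩)
      (v.deriv_limR 0 ⟨le_refl 0, ha⟩) (v.deriv_limL a ⟨ha, le_refl a⟩)
    simpa [hS] using this
  | succ n ih =>
    intro a ha v hcard
    have hne : v.S.Nonempty := Finset.card_pos.1 (by omega)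
    set m := v.S.max' hne with hmdef
    have hmS : m ∈ v.S := v.S.max'_mem hne
    have hm : m ∈ Set.Ioo 0 a := v.S_sub m hmS
    have hmax : ∀ x ∈ v.S, x ≤ m := fun x hx => v.S.le_max' x hx
    set w := v.restrict m hm hmax with hw
    have hwcard : w.S.card = n := by
      simp only [hw, PiecewiseC1.restrict, Finset.card_erase_of_mem hmS, hcard]; omega
    obtain ⟨h1, h2, h3⟩ := ih m hm.1 w hwcard
    -- piece on (m, a)
    have hsub2 : Set.Ioo m a ⊆ Set.Ioo 0 a \ (v.S : Set ℝ) := by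
      intro x hx
      exact ⟨⟨hm.1.trans hx.1, hx.2⟩, fun hxS => absurd (hmax x hxS) (not_le.2 hx.1)⟩
    obtain ⟨h1', h2', h3'⟩ := piece_lemma hm.2 (fun x hx => v.hasDeriv x (hsub2 hx))
      (v.derivCont.mono hsub2)
      (v.tendsto_limR m ⟨hm.1.le, hm.2⟩) (v.tendsto_limL a ⟨ha, le_refl a⟩)
      (v.deriv_limR m ⟨hm.1.le, hm.2⟩) (v.deriv_limL a ⟨ha, le_refl a⟩)
    -- w has same f', limL, limR as v
    have hwf' : w.f' = v.f' := rfl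
    have hwS : w.S = v.S.erase m := rfl
    rw [hwf'] at h1 h2 h3
    -- splitting
    have hunion : Set.Ioo 0 m ∪ Set.Ico m a = Set.Ioo 0 a :=
      Set.Ioo_union_Ico_eq_Ioo hm.1 hm.2.le
    have hICO1 : IntegrableOn v.f' (Ico m a) :=
      h1'.congr_set_ae Ioo_ae_eq_Ico.symm
    have hICO2 : IntegrableOn (fun x => v.f' x ^ 2) (Ico m a) :=
      h2'.congr_set_ae Ioo_ae_eq_Ico.symm
    have hdisj : Disjoint (Set.Ioo 0 m) (Set.Ico m a) := by
      rw [Set.disjoint_left]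
      exact fun x hx hx' => absurd hx.2 (not_lt.2 hx'.1)
    have hI1 : IntegrableOn v.f' (Ioo 0 a) := by
      rw [← hunion]; exact h1.union hICO1
    have hI2 : IntegrableOn (fun x => v.f' x ^ 2) (Ioo 0 a) := by
      rw [← hunion]; exact h2.union hICO2
    refine ⟨hI1, hI2, ?_⟩
    have hsplit : ∫ x in Ioo 0 a, v.f' x
        = (∫ x in Ioo 0 m, v.f' x) + ∫ x in Ico m a, v.f' x := by
      rw [← hunion, MeasureTheory.setIntegral_union hdisj measurableSet_Ico h1 hICO1]
    have hIco_eq : ∫ x in Ico m a, v.f' x = ∫ x in Ioo m a, v.f' x :=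
      MeasureTheory.setIntegral_congr_set Ioo_ae_eq_Ico.symm
    have hsum : ∑ x ∈ v.S, (v.limR x - v.limL x)
        = (∑ x ∈ v.S.erase m, (v.limR x - v.limL x)) + (v.limR m - v.limL m) :=
      (Finset.sum_erase_add v.S _ hmS).symm
    have hwL : w.limL = v.limL := rfl
    have hwR : w.limR = v.limR := rfl
    rw [hsplit, hIco_eq, h3', h3, hwL, hwR, hwS, hsum]
    ring

end AuxExample1

/-- **Example 1 (local minimality of the affine function).** For
`U = {(x,t) : λx − α/(4λ) < t < λx + α/(4λ)}`, the affine function `u(x) = λx`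
(with `F^α(u) = aλ²`) is a Dirichlet `U`-minimizer of `F^α`, even when `aλ² > α`. -/
theorem statement_9 (a lam α : ℝ) (ha : 0 < a) (hlam : 0 < lam) (hα : 0 < α) :
    ∀ v : PiecewiseC1 a,
      v.GraphIn {p : ℝ × ℝ | p.1 ∈ Set.Ioo 0 a ∧
        lam * p.1 - α / (4 * lam) < p.2 ∧ p.2 < lam * p.1 + α / (4 * lam)} →
      v.limR 0 = 0 → v.limL a = lam * a →
      a * lam ^ 2 ≤ MS0 a α v := by
  intro v hG h0 hA
  obtain ⟨h1, h2, h3⟩ := key_lemma v.S.card a ha v rfl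
  rw [h0, hA] at h3
  have hjump : ∀ x ∈ v.S, v.limR x - v.limL x < α / (2 * lam) := by
    intro x hx
    have hxI := v.S_sub x hx
    have hlowR : v.lower x ≤ v.limR x := by
      rw [PiecewiseC1.lower, if_pos hx]; exact min_le_right _ _
    have hhighR : v.limR x ≤ v.upper x := by
      rw [PiecewiseC1.upper, if_pos hx]; exact le_max_right _ _
    have hlowL : v.lower x ≤ v.limL x := by
      rw [PiecewiseC1.lower, if_pos hx]; exact min_le_left _ _
    have hhighL : v.limL x ≤ v.upper x := by
      rw [PiecewiseC1.upper, if_pos hx]; exact le_max_left _ _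
    have hR := hG x hxI (v.limR x) hlowR hhighR
    have hL := hG x hxI (v.limL x) hlowL hhighL
    simp only [Set.mem_setOf_eq] at hR hL
    have heq : α / (4 * lam) + α / (4 * lam) = α / (2 * lam) := by
      field_simp
      ring
    have := hR.2.2
    have := hL.2.1
    linarith
  -- main inequality
  rw [MS0]
  have hvol : (volume (Ioo (0:ℝ) a)).toReal = a := by
    rw [Real.volume_Ioo, ENNReal.toReal_ofReal (by linarith), sub_zero]
  have hconst : ∫ _x in Ioo (0:ℝ) a, lam ^ 2 = a * lam ^ 2 := by
    rw [setIntegral_const, Measure.real, hvol, smul_eq_mul]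
  have hnn : 0 ≤ ∫ x in Ioo 0 a, (v.f' x - lam) ^ 2 :=
    setIntegral_nonneg measurableSet_Ioo (fun x _ => sq_nonneg _)
  have h1' : IntegrableOn (fun x => 2 * lam * v.f' x) (Ioo 0 a) := h1.const_mul _
  have hc : IntegrableOn (fun _ : ℝ => lam ^ 2) (Ioo 0 a) :=
    integrableOn_const (ne_of_lt (by rw [Real.volume_Ioo]; exact ENNReal.ofReal_lt_top))
  have hexp : ∫ x in Ioo 0 a, (v.f' x - lam) ^ 2
      = (∫ x in Ioo 0 a, v.f' x ^ 2) - 2 * lam * (∫ x in Ioo 0 a, v.f' x) + a * lam ^ 2 := by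
    have heq2 : (fun x => (v.f' x - lam) ^ 2)
        = fun x => (v.f' x ^ 2 - 2 * lam * v.f' x) + lam ^ 2 := by
      funext x; ring
    have hsub : IntegrableOn (fun x => v.f' x ^ 2 - 2 * lam * v.f' x) (Ioo 0 a) := h2.sub h1'
    rw [heq2, integral_add hsub hc, integral_sub h2 h1', integral_const_mul, hconst]
  have hJ : 2 * lam * (∑ x ∈ v.S, (v.limR x - v.limL x)) ≤ α * v.S.card := by
    rw [Finset.mul_sum]
    calc ∑ x ∈ v.S, 2 * lam * (v.limR x - v.limL x) ≤ ∑ _x ∈ v.S, α := by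
          refine Finset.sum_le_sum (fun x hx => ?_)
          have hj := hjump x hx
          have h2l : (0:ℝ) < 2 * lam := by linarith
          calc 2 * lam * (v.limR x - v.limL x) ≤ 2 * lam * (α / (2 * lam)) :=
                mul_le_mul_of_nonneg_left hj.le h2l.le
            _ = α := by field_simp
      _ = α * v.S.card := by rw [Finset.sum_const, nsmul_eq_mul, mul_comm]
  have hkey := hexp ▸ hnn
  rw [h3] at hkey
  nlinarith [hkey, hJ]
end

section
/- Let 0<c<a, h>0, α>0, and let u:(0,a)→ℝ be the step function u:=0 on (0,c), u:=h on (c,a). Let ε>0 satisfy 2ε+√(2αε) ≤ h, 0<c−ε and c+ε<a. Define τ₁(x):=−ε for x≤c, τ₁(x):=−ε+(h/ε)(x−c) for c≤x≤c+ε, τ₁(x):=h−ε for x≥c+ε; define τ₂(x):=τ₁(x+ε)+2ε; and let U:={(x,t)∈(0,a)×ℝ : τ₁(x)<t<τ₂(x)}. Then F^α(u)=α ≤ F^α(v) for every v piecewise C¹ with finite jump set on (0,a) with graph Γ_v⊂U, v(0+)=0 and v(a−)=h; i.e. u is a Dirichlet U-minimizer of F^α even when aα > h². -/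
open MeasureTheory Set Filter

open intervalIntegral in

lemma my_cs (p q : ℝ) (hpq : p < q) (g : ℝ → ℝ)
    (hg : IntervalIntegrable g volume p q)
    (hg2 : IntervalIntegrable (fun x => g x ^ 2) volume p q) :
    (∫ x in p..q, g x) ^ 2 ≤ (q - p) * ∫ x in p..q, g x ^ 2 := by
  set I := ∫ x in p..q, g x with hI
  set m : ℝ := I / (q - p) with hm
  have h0 : (0:ℝ) ≤ ∫ x in p..q, (g x - m) ^ 2 :=
    intervalIntegral.integral_nonneg hpq.le (fun x _ => sq_nonneg _)
  have hexp : ∫ x in p..q, (g x - m) ^ 2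
      = (∫ x in p..q, g x ^ 2) - 2 * m * I + (q - p) * m ^ 2 := by
    have : ∀ x, (g x - m) ^ 2 = g x ^ 2 - 2 * m * g x + m ^ 2 := fun x => by ring
    simp_rw [this]
    rw [intervalIntegral.integral_add (hg2.sub (hg.const_mul (2 * m)))
      intervalIntegrable_const,
      intervalIntegral.integral_sub hg2 (hg.const_mul (2 * m)),
      intervalIntegral.integral_const_mul, intervalIntegral.integral_const]
    simp [smul_eq_mul]
    exact Or.inl hI.symm
  have hq : 0 < q - p := by linarith
  rw [hexp] at h0
  have hmI : m * (q - p) = I := by rw [hm, div_mul_cancel₀ _ hq.ne']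
  nlinarith [sq_nonneg m, sq_nonneg (I - m * (q-p))]

/-- **Example 2 (local minimality of the step function).** With
`τ₁, τ₂` and `U` as in Example 2, the step function `u = 0` on `(0,c)`,
`u = h` on `(c,a)` (with `F^α(u) = α`) is a Dirichlet `U`-minimizer of `F^α`,
even when `aα > h²`. -/
theorem statement_11 (a c h α ε : ℝ)
    (hc : 0 < c) (hca : c < a) (hh : 0 < h) (hα : 0 < α) (hε : 0 < ε)
    (hεh : 2 * ε + Real.sqrt (2 * α * ε) ≤ h)
    (hcε : 0 < c - ε) (hcε' : c + ε < a)
    (τ₁ τ₂ : ℝ → ℝ)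
    (hτ₁ : ∀ x : ℝ, τ₁ x =
      if x ≤ c then -ε else if x ≤ c + ε then -ε + (h / ε) * (x - c) else h - ε)
    (hτ₂ : ∀ x : ℝ, τ₂ x = τ₁ (x + ε) + 2 * ε)
    (U : Set (ℝ × ℝ))
    (hU : U = {p : ℝ × ℝ | p.1 ∈ Set.Ioo 0 a ∧ τ₁ p.1 < p.2 ∧ p.2 < τ₂ p.1}) :
    ∀ v : PiecewiseC1 a, v.GraphIn U →
      v.limR 0 = 0 → v.limL a = h →
      α ≤ MS0 a α v := by
  intro v hgr h0 hA
  have ha : 0 < a := lt_trans hc hca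
  have hint_nonneg : (0:ℝ) ≤ ∫ x in Set.Ioo 0 a, (v.f' x) ^ 2 :=
    integral_nonneg fun x => sq_nonneg _
  rcases Finset.eq_empty_or_nonempty v.S with hS | hS
  · -- no jumps: the energy alone is at least α
    have hDer : ∀ x ∈ Set.Ioo 0 a, HasDerivAt v.f (v.f' x) x := by
      intro x hx
      exact v.hasDeriv x (by simp [hS, hx])
    have hDC : ContinuousOn v.f' (Set.Ioo 0 a) := by
      have := v.derivCont; simpa [hS] using this
    -- graph condition gives pointwise bounds
    have hgr' : ∀ x ∈ Set.Ioo 0 a, τ₁ x < v.f x ∧ v.f x < τ₂ x := by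
      intro x hx
      have hx' : (x, v.f x) ∈ U := by
        have := hgr x hx (v.f x) ?_ ?_
        · exact this
        · simp [PiecewiseC1.lower, hS]
        · simp [PiecewiseC1.upper, hS]
      rw [hU] at hx'
      exact hx'.2
    set p := c - ε with hp
    set q := c + ε with hq
    have hpq : p < q := by simp [hp, hq]; linarith
    have hpa : Set.Icc p q ⊆ Set.Ioo 0 a := fun x hx =>
      ⟨lt_of_lt_of_le hcε hx.1, lt_of_le_of_lt hx.2 hcε'⟩
    have hpmem : p ∈ Set.Ioo 0 a := hpa ⟨le_refl _, hpq.le⟩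
    have hqmem : q ∈ Set.Ioo 0 a := hpa ⟨hpq.le, le_refl _⟩
    -- boundary values on the tube
    have hfp : v.f p < ε := by
      have := (hgr' p hpmem).2
      rw [hτ₂, hτ₁] at this
      have hpe : p + ε = c := by simp [hp]
      rw [hpe] at this
      simp only [le_refl, if_pos] at this
      linarith
    have hfq : h - ε < v.f q := by
      have := (hgr' q hqmem).1
      rw [hτ₁] at this
      have h1 : ¬ q ≤ c := by simp [hq]; linarith
      have h2 : q ≤ c + ε := le_refl _
      rw [if_neg h1, if_pos h2] at this
      have : -ε + (h / ε) * ε < v.f q := by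
        simpa [hq] using this
      rw [div_mul_cancel₀ _ hε.ne'] at this
      linarith
    -- FTC
    have hderiv : ∀ x ∈ Set.uIcc p q, HasDerivAt v.f (v.f' x) x := by
      intro x hx
      rw [Set.uIcc_of_le hpq.le] at hx
      exact hDer x (hpa hx)
    have hcont : ContinuousOn v.f' (Set.uIcc p q) := by
      rw [Set.uIcc_of_le hpq.le]; exact hDC.mono hpa
    have hii : IntervalIntegrable v.f' volume p q := hcont.intervalIntegrable
    have hii2 : IntervalIntegrable (fun x => v.f' x ^ 2) volume p q :=
      (hcont.pow 2).intervalIntegrable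
    have hftc : ∫ x in p..q, v.f' x = v.f q - v.f p :=
      intervalIntegral.integral_eq_sub_of_hasDerivAt hderiv hii
    -- jump of v across the tube
    have hsq : Real.sqrt (2 * α * ε) ^ 2 = 2 * α * ε := by
      rw [Real.sq_sqrt]; positivity
    have hsqrt_nonneg : 0 ≤ Real.sqrt (2 * α * ε) := Real.sqrt_nonneg _
    have hjump : Real.sqrt (2 * α * ε) ≤ v.f q - v.f p := by
      have : h - 2 * ε < v.f q - v.f p := by linarith
      linarith
    have hCS : (∫ x in p..q, v.f' x) ^ 2 ≤ (q - p) * ∫ x in p..q, v.f' x ^ 2 :=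
      my_cs p q hpq _ hii hii2
    have hqp : q - p = 2 * ε := by simp [hp, hq]; ring
    have hlow : α ≤ ∫ x in p..q, v.f' x ^ 2 := by
      rw [hftc] at hCS
      rw [hqp] at hCS
      nlinarith [sq_nonneg (v.f q - v.f p - Real.sqrt (2 * α * ε))]
    -- integrability of (f')² on (0,a)
    obtain ⟨L0, hL0⟩ := v.deriv_limR 0 ⟨le_refl 0, ha⟩
    obtain ⟨La, hLa⟩ := v.deriv_limL a ⟨ha, le_refl a⟩
    have hE0 : ∀ᶠ x in nhdsWithin 0 (Set.Ioi 0), |v.f' x| < |L0| + 1 :=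
      (hL0.abs).eventually_lt_const (lt_add_one _)
    have hEa : ∀ᶠ x in nhdsWithin a (Set.Iio a), |v.f' x| < |La| + 1 :=
      (hLa.abs).eventually_lt_const (lt_add_one _)
    obtain ⟨δ, hδ0, hδ⟩ := mem_nhdsGT_iff_exists_Ioo_subset.1 hE0
    obtain ⟨l, hla, hl⟩ := mem_nhdsLT_iff_exists_Ioo_subset.1 hEa
    set b₁ := min δ (a / 2) with hb₁
    set b₂ := max l (a / 2) with hb₂
    have hb₁0 : 0 < b₁ := lt_min hδ0 (by linarith)
    have hb₂a : b₂ < a := max_lt hla (by linarith)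
    have hIccsub : Set.Icc b₁ b₂ ⊆ Set.Ioo 0 a := fun x hx =>
      ⟨lt_of_lt_of_le hb₁0 hx.1, lt_of_le_of_lt hx.2 hb₂a⟩
    obtain ⟨Mc, hMc⟩ := (isCompact_Icc (a := b₁) (b := b₂)).exists_bound_of_continuousOn
      (hDC.mono hIccsub)
    set M := max (|L0| + 1) (max (|La| + 1) Mc) with hM
    have hbound : ∀ x ∈ Set.Ioo 0 a, |v.f' x| ≤ M := by
      intro x hx
      rcases lt_or_ge x b₁ with hx1 | hx1
      · have : x ∈ Set.Ioo 0 δ := ⟨hx.1, lt_of_lt_of_le hx1 (min_le_left _ _)⟩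
        exact le_trans (hδ this).le (le_max_left _ _)
      · rcases lt_or_ge b₂ x with hx2 | hx2
        · have : x ∈ Set.Ioo l a := ⟨lt_of_le_of_lt (le_max_left _ _) hx2, hx.2⟩
          exact le_trans (hl this).le (le_trans (le_max_left _ _) (le_max_right _ _))
        · have := hMc x ⟨hx1, hx2⟩
          rw [Real.norm_eq_abs] at this
          exact le_trans this (le_trans (le_max_right _ _) (le_max_right _ _))
    have hInt : IntegrableOn (fun x => v.f' x ^ 2) (Set.Ioo 0 a) volume := by
      refine ⟨((hDC.pow 2).aestronglyMeasurable measurableSet_Ioo), ?_⟩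
      refine HasFiniteIntegral.restrict_of_bounded (C := M ^ 2) measure_Ioo_lt_top ?_
      refine (ae_restrict_iff' measurableSet_Ioo).2 (Filter.Eventually.of_forall ?_)
      intro x hx
      have h1 := hbound x hx
      have h2 : |v.f' x| ^ 2 ≤ M ^ 2 := by
        have := abs_nonneg (v.f' x)
        nlinarith
      rw [Real.norm_eq_abs, abs_pow]
      simpa using h2
    -- monotonicity
    have hmono : ∫ x in Set.Ioc p q, v.f' x ^ 2 ≤ ∫ x in Set.Ioo 0 a, v.f' x ^ 2 := by
      refine setIntegral_mono_set hInt ?_ ?_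
      · exact Filter.Eventually.of_forall fun x => sq_nonneg _
      · refine HasSubset.Subset.eventuallyLE fun x hx => ?_
        exact ⟨lt_of_lt_of_le hcε hx.1.le, lt_of_le_of_lt hx.2 hcε'⟩
    have hiq : ∫ x in p..q, v.f' x ^ 2 = ∫ x in Set.Ioc p q, v.f' x ^ 2 :=
      intervalIntegral.integral_of_le hpq.le
    have hcard : (v.S.card : ℝ) = 0 := by simp [hS]
    rw [MS0, hcard]
    rw [hiq] at hlow
    linarith
  · -- at least one jump
    have hcard : (1:ℝ) ≤ (v.S.card : ℝ) := by
      exact_mod_cast Finset.one_le_card.2 hS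
    rw [MS0]
    nlinarith
end

section
/- Let a>0, λ>0, and define φ=(φ^x,φ^t) on (0,a)×ℝ by: φ(x,t):=(2t/x,(t/x)²) if 0≤t≤λx; φ(x,t):=(2(λa−t)/(a−x),((λa−t)/(a−x))²) if λx≤t≤λa; φ(x,t):=(0,0) otherwise. Then: (i) φ is bounded and continuous on (0,a)×ℝ, with |φ^x|≤2λ; (ii) φ is divergence-free in the distributional sense: ∫_{(0,a)×ℝ} φ·∇ψ dx dt = 0 for every ψ∈C_c^∞((0,a)×ℝ); (iii) (1/4)|φ^x(x,t)|² ≤ φ^t(x,t) for all (x,t); (iv) 0 ≤ ∫_{t₁}^{t₂} φ^x(x,t) dt ≤ aλ² for every x∈(0,a) and all t₁<t₂; (v) φ^x(x,λx)=2λ and φ^t(x,λx)=λ² for every x∈(0,a). -/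
open MeasureTheory Set Filter Topology

noncomputable def mcal (a lam x t : ℝ) : ℝ := max 0 (min (t / x) ((lam * a - t) / (a - x)))

noncomputable def Fcal (a lam x t : ℝ) : ℝ :=
  if t ≤ 0 then 0
  else if t ≤ lam * x then t ^ 2 / x
  else if t ≤ lam * a then lam ^ 2 * a - (lam * a - t) ^ 2 / (a - x)
  else lam ^ 2 * a

lemma phi_eq (a lam x t : ℝ) (hlam : 0 < lam) (hx0 : 0 < x) (hxa : x < a) :
    ((if 0 ≤ t ∧ t ≤ lam * x then 2 * t / x
      else if lam * x ≤ t ∧ t ≤ lam * a then 2 * (lam * a - t) / (a - x) else 0)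
      = 2 * mcal a lam x t) ∧
    ((if 0 ≤ t ∧ t ≤ lam * x then (t / x) ^ 2
      else if lam * x ≤ t ∧ t ≤ lam * a then ((lam * a - t) / (a - x)) ^ 2 else 0)
      = (mcal a lam x t) ^ 2) := by
  have hax : 0 < a - x := by linarith
  by_cases h1 : 0 ≤ t ∧ t ≤ lam * x
  · have hm : mcal a lam x t = t / x := by
      unfold mcal
      have huv : t / x ≤ (lam * a - t) / (a - x) := by
        rw [div_le_div_iff₀ hx0 hax]
        nlinarith [h1.1, h1.2]
      rw [min_eq_left huv, max_eq_right (div_nonneg h1.1 hx0.le)]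
    rw [if_pos h1, if_pos h1, hm]
    exact ⟨by ring, by ring⟩
  · by_cases h2 : lam * x ≤ t ∧ t ≤ lam * a
    · have hm : mcal a lam x t = (lam * a - t) / (a - x) := by
        unfold mcal
        have huv : (lam * a - t) / (a - x) ≤ t / x := by
          rw [div_le_div_iff₀ hax hx0]
          nlinarith [h2.1]
        rw [min_eq_right huv, max_eq_right (div_nonneg (by linarith [h2.2]) hax.le)]
      rw [if_neg h1, if_pos h2, if_neg h1, if_pos h2, hm]
      exact ⟨by ring, by ring⟩
    · have hm : mcal a lam x t = 0 := by
        unfold mcal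
        rcases lt_or_ge t 0 with ht | ht
        · refine max_eq_left (le_trans (min_le_left _ _) ?_)
          rw [div_nonpos_iff]; right; exact ⟨ht.le, hx0.le⟩
        · have htx : ¬ t ≤ lam * x := fun h => h1 ⟨ht, h⟩
          push_neg at htx
          have hta : ¬ t ≤ lam * a := fun h => h2 ⟨htx.le, h⟩
          push_neg at hta
          refine max_eq_left (le_trans (min_le_right _ _) ?_)
          rw [div_nonpos_iff]; right; exact ⟨by linarith, hax.le⟩
      rw [if_neg h1, if_neg h2, if_neg h1, if_neg h2, hm]
      exact ⟨by ring, by ring⟩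

lemma mcal_nonneg (a lam x t : ℝ) : 0 ≤ mcal a lam x t := le_max_left _ _

lemma mcal_le (a lam x t : ℝ) (hlam : 0 < lam) (hx0 : 0 < x) (hxa : x < a) :
    mcal a lam x t ≤ lam := by
  have hax : 0 < a - x := by linarith
  refine max_le hlam.le ?_
  rcases le_or_gt t (lam * x) with h | h
  · exact le_trans (min_le_left _ _) (by rw [div_le_iff₀ hx0]; linarith)
  · exact le_trans (min_le_right _ _) (by rw [div_le_iff₀ hax]; nlinarith)

lemma mcal_continuousOn (a lam : ℝ) :
    ContinuousOn (fun p : ℝ × ℝ => mcal a lam p.1 p.2) (Set.Ioo 0 a ×ˢ (Set.univ : Set ℝ)) := by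
  apply ContinuousOn.sup continuousOn_const
  apply ContinuousOn.inf
  · exact ContinuousOn.div (continuous_snd.continuousOn) (continuous_fst.continuousOn)
      (fun p hp => ne_of_gt hp.1.1)
  · exact ContinuousOn.div ((continuous_const.sub continuous_snd).continuousOn)
      ((continuous_const.sub continuous_fst).continuousOn)
      (fun p hp => sub_ne_zero_of_ne (ne_of_gt hp.1.2))


lemma glue_hasDerivAt {F f g : ℝ → ℝ} {s t : Set ℝ} {c d : ℝ}
    (hfs : Set.EqOn F f s) (hgt : Set.EqOn F g t)
    (hcs : c ∈ s) (hct : c ∈ t) (hst : s ∪ t ∈ 𝓝 c)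
    (hf : HasDerivAt f d c) (hg : HasDerivAt g d c) :
    HasDerivAt F d c := by
  have h1 : HasDerivWithinAt F d s c := (hf.hasDerivWithinAt).congr hfs (hfs hcs)
  have h2 : HasDerivWithinAt F d t c := (hg.hasDerivWithinAt).congr hgt (hgt hct)
  exact (h1.union h2).hasDerivAt hst

lemma hasDerivAt_of_eqOn_open {F f : ℝ → ℝ} {s : Set ℝ} {c d : ℝ}
    (hs : IsOpen s) (hc : c ∈ s) (h : Set.EqOn F f s) (hf : HasDerivAt f d c) :
    HasDerivAt F d c :=
  hf.congr_of_eventuallyEq (eventually_of_mem (hs.mem_nhds hc) (fun y hy => h hy))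

lemma Fcal_hasDerivAt_t (a lam x : ℝ) (hlam : 0 < lam) (hx0 : 0 < x) (hxa : x < a) (t : ℝ) :
    HasDerivAt (Fcal a lam x)
      (if 0 ≤ t ∧ t ≤ lam * x then 2 * t / x
        else if lam * x ≤ t ∧ t ≤ lam * a then 2 * (lam * a - t) / (a - x)
        else 0) t := by
  have hax : 0 < a - x := by linarith
  have hlx : 0 < lam * x := by positivity
  have hla : lam * x < lam * a := by nlinarith
  -- pieces
  have hp1 : ∀ u : ℝ, HasDerivAt (fun s => s ^ 2 / x) (2 * u / x) u := by
    intro u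
    have := (hasDerivAt_pow 2 u).div_const x
    refine this.congr_deriv ?_
    ring
  have hp2 : ∀ u : ℝ, HasDerivAt (fun s => lam ^ 2 * a - (lam * a - s) ^ 2 / (a - x))
      (2 * (lam * a - u) / (a - x)) u := by
    intro u
    have h1 : HasDerivAt (fun s : ℝ => lam * a - s) (0 - 1) u :=
      (hasDerivAt_const u (lam * a)).sub (hasDerivAt_id u)
    have h2 := ((h1.pow 2).div_const (a - x))
    have := (hasDerivAt_const u (lam ^ 2 * a)).sub h2
    refine this.congr_deriv ?_
    ring
  -- EqOn facts
  have E0 : Set.EqOn (Fcal a lam x) (fun _ => (0:ℝ)) (Set.Iic 0) := by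
    intro s hs; simp only [Fcal, if_pos (mem_Iic.mp hs)]
  have E1 : Set.EqOn (Fcal a lam x) (fun s => s ^ 2 / x) (Set.Icc 0 (lam * x)) := by
    intro s hs
    rcases le_or_gt s 0 with h | h
    · have : s = 0 := le_antisymm h hs.1
      simp [Fcal, this]
    · simp only [Fcal, if_neg (not_le.mpr h), if_pos hs.2]
  have E2 : Set.EqOn (Fcal a lam x)
      (fun s => lam ^ 2 * a - (lam * a - s) ^ 2 / (a - x)) (Set.Icc (lam * x) (lam * a)) := by
    intro s hs
    have hs0 : ¬ s ≤ 0 := not_le.mpr (lt_of_lt_of_le hlx hs.1)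
    rcases le_or_gt s (lam * x) with h | h
    · have hsx : s = lam * x := le_antisymm h hs.1
      subst hsx
      simp only [Fcal, if_neg hs0, if_pos h]
      field_simp
      ring
    · simp only [Fcal, if_neg hs0, if_neg (not_le.mpr h), if_pos hs.2]
  have E3 : Set.EqOn (Fcal a lam x) (fun _ => lam ^ 2 * a) (Set.Ici (lam * a)) := by
    intro s hs
    have hs0 : ¬ s ≤ 0 := not_le.mpr (lt_of_lt_of_le (lt_trans hlx hla) hs)
    have hsx : ¬ s ≤ lam * x := not_le.mpr (lt_of_lt_of_le hla hs)
    rcases le_or_gt s (lam * a) with h | h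
    · have hsa : s = lam * a := le_antisymm h hs
      subst hsa
      simp only [Fcal, if_neg hs0, if_neg hsx, if_pos h]
      simp
    · simp only [Fcal, if_neg hs0, if_neg hsx, if_neg (not_le.mpr h)]
  rcases lt_trichotomy t 0 with ht | ht | ht
  · -- t < 0
    have hv : (if 0 ≤ t ∧ t ≤ lam * x then 2 * t / x
        else if lam * x ≤ t ∧ t ≤ lam * a then 2 * (lam * a - t) / (a - x) else 0) = 0 := by
      rw [if_neg (fun h => absurd h.1 (not_le.mpr ht)),
        if_neg (fun h => absurd h.1 (not_le.mpr (lt_trans ht hlx)))]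
    rw [hv]
    exact hasDerivAt_of_eqOn_open isOpen_Iio ht (fun y hy => E0 (mem_Iic.mpr (mem_Iio.mp hy).le))
      (hasDerivAt_const t 0)
  · -- t = 0
    subst ht
    have hv : (if (0:ℝ) ≤ (0:ℝ) ∧ (0:ℝ) ≤ lam * x then 2 * 0 / x
        else if lam * x ≤ (0:ℝ) ∧ (0:ℝ) ≤ lam * a then 2 * (lam * a - 0) / (a - x) else 0)
        = 2 * 0 / x := by
      rw [if_pos ⟨le_refl 0, hlx.le⟩]
    rw [hv]
    have hun : Set.Iic (0:ℝ) ∪ Set.Icc 0 (lam * x) ∈ 𝓝 (0:ℝ) := by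
      refine mem_of_superset (Iio_mem_nhds hlx) (fun y hy => ?_)
      rcases le_or_gt y 0 with h | h
      · exact Or.inl h
      · exact Or.inr ⟨h.le, le_of_lt hy⟩
    refine glue_hasDerivAt E0 E1 (mem_Iic.mpr (le_refl 0)) ⟨le_refl 0, hlx.le⟩ hun ?_ (hp1 0)
    refine (hasDerivAt_const (0:ℝ) (0:ℝ)).congr_deriv ?_
    simp
  · rcases lt_trichotomy t (lam * x) with htx | htx | htx
    · -- 0 < t < lam * x
      have hv : (if 0 ≤ t ∧ t ≤ lam * x then 2 * t / x
          else if lam * x ≤ t ∧ t ≤ lam * a then 2 * (lam * a - t) / (a - x) else 0)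
          = 2 * t / x := if_pos ⟨ht.le, htx.le⟩
      rw [hv]
      exact hasDerivAt_of_eqOn_open isOpen_Ioo ⟨ht, htx⟩
        (fun y hy => E1 ⟨hy.1.le, hy.2.le⟩) (hp1 t)
    · -- t = lam * x
      have hv : (if 0 ≤ t ∧ t ≤ lam * x then 2 * t / x
          else if lam * x ≤ t ∧ t ≤ lam * a then 2 * (lam * a - t) / (a - x) else 0)
          = 2 * t / x := if_pos ⟨ht.le, htx.le⟩
      rw [hv]
      have hun : Set.Icc (0:ℝ) (lam * x) ∪ Set.Icc (lam * x) (lam * a) ∈ 𝓝 t := by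
        refine mem_of_superset (Ioo_mem_nhds (show (0:ℝ) < t by rw [htx]; exact hlx) (show t < lam * a by rw [htx]; exact hla)) (fun y hy => ?_)
        rcases le_or_gt y (lam * x) with h | h
        · exact Or.inl ⟨hy.1.le, h⟩
        · exact Or.inr ⟨h.le, hy.2.le⟩
      refine glue_hasDerivAt E1 E2 ⟨ht.le, htx.le⟩ ⟨htx.ge, show t ≤ lam * a by rw [htx]; exact hla.le⟩ hun (hp1 t) ?_
      convert hp2 t using 1
      rw [htx]
      field_simp
    · rcases lt_trichotomy t (lam * a) with hta | hta | hta
      · -- lam * x < t < lam * a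
        have hv : (if 0 ≤ t ∧ t ≤ lam * x then 2 * t / x
            else if lam * x ≤ t ∧ t ≤ lam * a then 2 * (lam * a - t) / (a - x) else 0)
            = 2 * (lam * a - t) / (a - x) := by
          rw [if_neg (fun h => absurd h.2 (not_le.mpr htx)), if_pos ⟨htx.le, hta.le⟩]
        rw [hv]
        exact hasDerivAt_of_eqOn_open isOpen_Ioo ⟨htx, hta⟩
          (fun y hy => E2 ⟨hy.1.le, hy.2.le⟩) (hp2 t)
      · -- t = lam * a
        have hv : (if 0 ≤ t ∧ t ≤ lam * x then 2 * t / x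
            else if lam * x ≤ t ∧ t ≤ lam * a then 2 * (lam * a - t) / (a - x) else 0)
            = 2 * (lam * a - t) / (a - x) := by
          rw [if_neg (fun h => absurd h.2 (not_le.mpr htx)), if_pos ⟨htx.le, hta.le⟩]
        rw [hv]
        have hun : Set.Icc (lam * x) (lam * a) ∪ Set.Ici (lam * a) ∈ 𝓝 t := by
          refine mem_of_superset (Ioi_mem_nhds (show lam * x < t by rw [hta]; exact hla)) (fun y hy => ?_)
          rcases le_or_gt y (lam * a) with h | h
          · exact Or.inl ⟨le_of_lt hy, h⟩
          · exact Or.inr h.le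
        refine glue_hasDerivAt E2 E3 ⟨htx.le, hta.le⟩ (mem_Ici.mpr hta.ge) hun (hp2 t) ?_
        refine (hasDerivAt_const t (lam ^ 2 * a)).congr_deriv ?_
        rw [hta]
        simp
      · -- t > lam * a
        have hv : (if 0 ≤ t ∧ t ≤ lam * x then 2 * t / x
            else if lam * x ≤ t ∧ t ≤ lam * a then 2 * (lam * a - t) / (a - x) else 0)
            = 0 := by
          rw [if_neg (fun h => absurd h.2 (not_le.mpr htx)),
            if_neg (fun h => absurd h.2 (not_le.mpr hta))]
        rw [hv]
        exact hasDerivAt_of_eqOn_open isOpen_Ioi hta (fun y hy => E3 (mem_Ici.mpr (le_of_lt hy)))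
          (hasDerivAt_const t _)




lemma Fcal_hasDerivAt_x (a lam x t : ℝ) (hlam : 0 < lam) (hx0 : 0 < x) (hxa : x < a) :
    HasDerivAt (fun y => Fcal a lam y t)
      (-(if 0 ≤ t ∧ t ≤ lam * x then (t / x) ^ 2
        else if lam * x ≤ t ∧ t ≤ lam * a then ((lam * a - t) / (a - x)) ^ 2
        else 0)) x := by
  have ha : 0 < a := lt_trans hx0 hxa
  have hax : 0 < a - x := by linarith
  have hlx : 0 < lam * x := by positivity
  have hla : lam * x < lam * a := by nlinarith
  -- piece 1 : y ↦ t^2 / y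
  have hp1 : HasDerivAt (fun y : ℝ => t ^ 2 / y) (-(t ^ 2 / x ^ 2)) x := by
    have := (hasDerivAt_const x (t ^ 2)).div (hasDerivAt_id x) (ne_of_gt hx0)
    refine this.congr_deriv ?_
    simp only [id]
    ring
  -- piece 2 : y ↦ lam^2*a - (lam*a-t)^2/(a-y)
  have hp2 : HasDerivAt (fun y : ℝ => lam ^ 2 * a - (lam * a - t) ^ 2 / (a - y))
      (-((lam * a - t) ^ 2 / (a - x) ^ 2)) x := by
    have hden : HasDerivAt (fun y : ℝ => a - y) (0 - 1) x :=
      (hasDerivAt_const x a).sub (hasDerivAt_id x)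
    have h2 := (hasDerivAt_const x ((lam * a - t) ^ 2)).div hden (ne_of_gt hax)
    have := (hasDerivAt_const x (lam ^ 2 * a)).sub h2
    refine this.congr_deriv ?_
    ring
  rcases le_or_gt t 0 with ht | ht
  · -- t ≤ 0 : F(·,t) ≡ 0
    have hv : (if 0 ≤ t ∧ t ≤ lam * x then (t / x) ^ 2
        else if lam * x ≤ t ∧ t ≤ lam * a then ((lam * a - t) / (a - x)) ^ 2 else 0) = 0 := by
      rcases lt_or_eq_of_le ht with h | h
      · rw [if_neg (fun hh => absurd hh.1 (not_le.mpr h)),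
          if_neg (fun hh => absurd (lt_of_le_of_lt hh.1 h) (not_lt.mpr hlx.le))]
      · rw [if_pos ⟨h.ge, by rw [h]; exact hlx.le⟩, h]
        simp
    rw [hv]
    have heq : (fun y => Fcal a lam y t) = (fun _ : ℝ => (0:ℝ)) :=
      funext (fun y => by simp [Fcal, if_pos ht])
    rw [heq, neg_zero]
    exact hasDerivAt_const x 0
  · rcases lt_or_ge t (lam * a) with hta | hta
    · -- 0 < t < lam * a
      rcases lt_trichotomy (lam * x) t with hxt | hxt | hxt
      · -- lam * x < t : region 2 near x
        have hv : (if 0 ≤ t ∧ t ≤ lam * x then (t / x) ^ 2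
            else if lam * x ≤ t ∧ t ≤ lam * a then ((lam * a - t) / (a - x)) ^ 2 else 0)
            = ((lam * a - t) / (a - x)) ^ 2 := by
          rw [if_neg (fun hh => absurd hh.2 (not_le.mpr hxt)), if_pos ⟨hxt.le, hta.le⟩]
        rw [hv]
        have hmem : x ∈ Set.Iio (t / lam) := by
          rw [mem_Iio, lt_div_iff₀ hlam]
          linarith [hxt]
        refine hasDerivAt_of_eqOn_open
          (f := fun y => lam ^ 2 * a - (lam * a - t) ^ 2 / (a - y))
          isOpen_Iio hmem (fun y hy => ?_) ?_
        · have hyt : lam * y < t := by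
            rw [mem_Iio, lt_div_iff₀ hlam] at hy
            linarith [hy]
          simp only [Fcal, if_neg (not_le.mpr ht), if_neg (not_le.mpr hyt), if_pos hta.le]
        · convert hp2 using 1
          rw [div_pow]
      · -- lam * x = t : glue
        have hv : (if 0 ≤ t ∧ t ≤ lam * x then (t / x) ^ 2
            else if lam * x ≤ t ∧ t ≤ lam * a then ((lam * a - t) / (a - x)) ^ 2 else 0)
            = (t / x) ^ 2 := if_pos ⟨ht.le, hxt.ge⟩
        rw [hv]
        -- on Iic x : region 2 formula ; on Ici x : region 1 formula
        have E2 : Set.EqOn (fun y => Fcal a lam y t)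
            (fun y => lam ^ 2 * a - (lam * a - t) ^ 2 / (a - y)) (Set.Iic x) := by
          intro y hy
          rcases lt_or_eq_of_le (mem_Iic.mp hy) with h | h
          · have : ¬ t ≤ lam * y := by
              push_neg
              rw [← hxt]
              nlinarith [h]
            simp only [Fcal, if_neg (not_le.mpr ht), if_neg this, if_pos hta.le]
          · subst h
            simp only [Fcal, if_neg (not_le.mpr ht), if_pos hxt.ge]
            rw [← hxt]
            field_simp
            ring
        have E1 : Set.EqOn (fun y => Fcal a lam y t) (fun y => t ^ 2 / y) (Set.Ici x) := by
          intro y hy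
          have : t ≤ lam * y := by
            rw [← hxt]
            nlinarith [mem_Ici.mp hy]
          simp only [Fcal, if_neg (not_le.mpr ht), if_pos this]
        have hun : Set.Iic x ∪ Set.Ici x ∈ 𝓝 x := by
          rw [Iic_union_Ici]
          exact Filter.univ_mem
        refine glue_hasDerivAt E2 E1 (mem_Iic.mpr le_rfl) (mem_Ici.mpr le_rfl) hun ?_ ?_
        · convert hp2 using 1
          rw [← hxt]
          field_simp
        · convert hp1 using 1
          rw [div_pow]
      · -- t < lam * x : region 1 near x
        have hv : (if 0 ≤ t ∧ t ≤ lam * x then (t / x) ^ 2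
            else if lam * x ≤ t ∧ t ≤ lam * a then ((lam * a - t) / (a - x)) ^ 2 else 0)
            = (t / x) ^ 2 := if_pos ⟨ht.le, hxt.le⟩
        rw [hv]
        have hmem : x ∈ Set.Ioi (t / lam) := by
          rw [mem_Ioi, div_lt_iff₀ hlam]
          linarith [hxt]
        refine hasDerivAt_of_eqOn_open (f := fun y => t ^ 2 / y)
          isOpen_Ioi hmem (fun y hy => ?_) ?_
        · have hyt : t ≤ lam * y := by
            rw [mem_Ioi, div_lt_iff₀ hlam] at hy
            nlinarith [hy]
          simp only [Fcal, if_neg (not_le.mpr ht), if_pos hyt]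
        · convert hp1 using 1
          rw [div_pow]
    · -- t ≥ lam * a : F(·,t) locally constant = lam^2*a on Iio a ∩ ...
      have hv : (if 0 ≤ t ∧ t ≤ lam * x then (t / x) ^ 2
          else if lam * x ≤ t ∧ t ≤ lam * a then ((lam * a - t) / (a - x)) ^ 2 else 0) = 0 := by
        rcases lt_or_eq_of_le hta with h | h
        · rw [if_neg (fun hh => absurd hh.2 (not_le.mpr (lt_of_lt_of_le hla hta))),
            if_neg (fun hh => absurd hh.2 (not_le.mpr h))]
        · rw [if_neg (fun hh => absurd hh.2 (not_le.mpr (lt_of_lt_of_le hla hta))),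
            if_pos ⟨le_trans hla.le h.le, h.ge⟩, ← h]
          simp
      rw [hv]
      refine hasDerivAt_of_eqOn_open (f := fun _ : ℝ => lam ^ 2 * a)
        isOpen_Iio (mem_Iio.mpr hxa) (fun y hy => ?_) ?_
      · have hyt : ¬ t ≤ lam * y := by
          push_neg
          calc lam * y < lam * a := by nlinarith [mem_Iio.mp hy]
          _ ≤ t := hta
        rcases lt_or_eq_of_le hta with h | h
        · simp only [Fcal, if_neg (not_le.mpr ht), if_neg hyt, if_neg (not_le.mpr h)]
        · subst h
          simp only [Fcal, if_neg (not_le.mpr ht), if_neg hyt, if_pos le_rfl]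
          simp
      · simpa using hasDerivAt_const x (lam ^ 2 * a)

lemma Fcal_bounds (a lam x t : ℝ) (hlam : 0 < lam) (hx0 : 0 < x) (hxa : x < a) :
    0 ≤ Fcal a lam x t ∧ Fcal a lam x t ≤ lam ^ 2 * a := by
  have ha : 0 < a := lt_trans hx0 hxa
  have hax : 0 < a - x := by linarith
  unfold Fcal
  rcases le_or_gt t 0 with ht | ht
  · rw [if_pos ht]
    exact ⟨le_refl 0, mul_nonneg (sq_nonneg lam) ha.le⟩
  · rw [if_neg (not_le.mpr ht)]
    rcases le_or_gt t (lam * x) with h1 | h1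
    · rw [if_pos h1]
      refine ⟨div_nonneg (sq_nonneg t) hx0.le, ?_⟩
      rw [div_le_iff₀ hx0]
      have k1 : t * t ≤ (lam * x) * (lam * x) :=
        mul_le_mul h1 h1 ht.le (mul_nonneg hlam.le hx0.le)
      have k2 : 0 ≤ lam ^ 2 * x * (a - x) :=
        mul_nonneg (mul_nonneg (sq_nonneg lam) hx0.le) (by linarith)
      nlinarith [k1, k2]
    · rw [if_neg (not_le.mpr h1)]
      rcases le_or_gt t (lam * a) with h2 | h2
      · rw [if_pos h2]
        have hq1 : 0 ≤ (lam * a - t) ^ 2 / (a - x) := div_nonneg (sq_nonneg _) hax.le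
        have hkey : (lam * a - t) ^ 2 / (a - x) ≤ lam ^ 2 * a := by
          rw [div_le_iff₀ hax]
          nlinarith [h1, h2, hx0, hax]
        exact ⟨by linarith, by linarith⟩
      · rw [if_neg (not_le.mpr h2)]
        exact ⟨mul_nonneg (sq_nonneg lam) ha.le, le_refl _⟩


lemma div_free (a lam : ℝ) (ha : 0 < a) (hlam : 0 < lam)
    (φx φt : ℝ → ℝ → ℝ)
    (hφx : ∀ x t : ℝ, φx x t =
      if 0 ≤ t ∧ t ≤ lam * x then 2 * t / x
      else if lam * x ≤ t ∧ t ≤ lam * a then 2 * (lam * a - t) / (a - x)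
      else 0)
    (hφt : ∀ x t : ℝ, φt x t =
      if 0 ≤ t ∧ t ≤ lam * x then (t / x) ^ 2
      else if lam * x ≤ t ∧ t ≤ lam * a then ((lam * a - t) / (a - x)) ^ 2
      else 0)
    (ψ : ℝ × ℝ → ℝ) (hψ : ContDiff ℝ (⊤ : ℕ∞) ψ) (hcs : HasCompactSupport ψ)
    (hsupp : tsupport ψ ⊆ Set.Ioo 0 a ×ˢ (Set.univ : Set ℝ)) :
    (∫ p in Set.Ioo 0 a ×ˢ (Set.univ : Set ℝ),
        fderiv ℝ ψ p (φx p.1 p.2, φt p.1 p.2)) = 0 := by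
  classical
  have hKc : IsCompact (tsupport ψ) := hcs
  -- bounds for the support
  obtain ⟨x0, x1, hx0m, hx1m, hx01, hKx⟩ : ∃ x0 x1 : ℝ, x0 ∈ Set.Ioo 0 a ∧
      x1 ∈ Set.Ioo 0 a ∧ x0 ≤ x1 ∧ ∀ p ∈ tsupport ψ, x0 ≤ p.1 ∧ p.1 ≤ x1 := by
    have hSc : IsCompact ((Prod.fst '' tsupport ψ) ∪ {a / 2}) :=
      (hKc.image continuous_fst).union isCompact_singleton
    have hSne : ((Prod.fst '' tsupport ψ) ∪ {a / 2}).Nonempty := ⟨a / 2, Or.inr rfl⟩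
    have hSsub : ((Prod.fst '' tsupport ψ) ∪ {a / 2}) ⊆ Set.Ioo 0 a := by
      rintro y (⟨p, hp, rfl⟩ | hy)
      · exact (hsupp hp).1
      · rw [mem_singleton_iff] at hy
        subst hy
        exact ⟨half_pos ha, half_lt_self ha⟩
    refine ⟨sInf _, sSup _, hSsub (hSc.sInf_mem hSne), hSsub (hSc.sSup_mem hSne),
      csInf_le_csSup hSne hSc.bddBelow hSc.bddAbove, fun p hp => ⟨?_, ?_⟩⟩
    · exact csInf_le hSc.bddBelow (Or.inl ⟨p, hp, rfl⟩)
    · exact le_csSup hSc.bddAbove (Or.inl ⟨p, hp, rfl⟩)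
  obtain ⟨t0, t1, ht01, hKt⟩ : ∃ t0 t1 : ℝ, t0 ≤ t1 ∧
      ∀ p ∈ tsupport ψ, t0 < p.2 ∧ p.2 < t1 := by
    have hSc : IsCompact ((Prod.snd '' tsupport ψ) ∪ {0}) :=
      (hKc.image continuous_snd).union isCompact_singleton
    have hSne : ((Prod.snd '' tsupport ψ) ∪ {0}).Nonempty := ⟨0, Or.inr rfl⟩
    refine ⟨sInf _ - 1, sSup _ + 1,
      by linarith [csInf_le_csSup hSne hSc.bddBelow hSc.bddAbove], fun p hp => ⟨?_, ?_⟩⟩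
    · have := csInf_le hSc.bddBelow (Or.inl ⟨p, hp, rfl⟩)
      linarith
    · have := le_csSup hSc.bddAbove (Or.inl ⟨p, hp, rfl⟩)
      linarith
  set u0 := x0 / 2 with hu0def
  set u1 := (x1 + a) / 2 with hu1def
  have hu00 : 0 < u0 := half_pos hx0m.1
  have hu0x : u0 < x0 := half_lt_self hx0m.1
  have hu1x : x1 < u1 := by rw [hu1def]; linarith [hx1m.2]
  have hu1a : u1 < a := by rw [hu1def]; linarith [hx1m.2]
  have hu01 : u0 < u1 := by linarith
  -- smoothness package
  have hC : ContDiff ℝ (⊤ : ℕ∞) (fderiv ℝ ψ) := hψ.fderiv_right (by simp)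
  set ψ1 : ℝ × ℝ → ℝ := fun p => fderiv ℝ ψ p (1, 0) with hψ1def
  set ψ2 : ℝ × ℝ → ℝ := fun p => fderiv ℝ ψ p (0, 1) with hψ2def
  have hψ1 : ContDiff ℝ (⊤ : ℕ∞) ψ1 := by rw [hψ1def]; exact hC.clm_apply contDiff_const
  have hψ2 : ContDiff ℝ (⊤ : ℕ∞) ψ2 := by rw [hψ2def]; exact hC.clm_apply contDiff_const
  set D1 : ℝ × ℝ → ℝ := fun p => fderiv ℝ ψ1 p (0, 1) with hD1def
  set D2 : ℝ × ℝ → ℝ := fun p => fderiv ℝ ψ2 p (1, 0) with hD2def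
  have hD1c : Continuous D1 := by
    rw [hD1def]
    exact (hψ1.continuous_fderiv (by simp)).clm_apply continuous_const
  have hD2c : Continuous D2 := by
    rw [hD2def]
    exact (hψ2.continuous_fderiv (by simp)).clm_apply continuous_const
  -- compact supports
  have hψ1s : HasCompactSupport ψ1 := by rw [hψ1def]; exact hcs.fderiv_apply ℝ _
  have hψ2s : HasCompactSupport ψ2 := by rw [hψ2def]; exact hcs.fderiv_apply ℝ _
  have hD1s : HasCompactSupport D1 := by rw [hD1def]; exact hψ1s.fderiv_apply ℝ _
  have hD2s : HasCompactSupport D2 := by rw [hD2def]; exact hψ2s.fderiv_apply ℝ _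
  -- vanishing outside the support of ψ
  have hsupψ1 : ∀ p ∉ tsupport ψ, ψ1 p = 0 := by
    intro p hp
    have h0 : fderiv ℝ ψ p = 0 := by
      by_contra h
      exact hp (support_fderiv_subset ℝ (Function.mem_support.mpr h))
    rw [hψ1def]
    simp [h0]
  have hsupψ2 : ∀ p ∉ tsupport ψ, ψ2 p = 0 := by
    intro p hp
    have h0 : fderiv ℝ ψ p = 0 := by
      by_contra h
      exact hp (support_fderiv_subset ℝ (Function.mem_support.mpr h))
    rw [hψ2def]
    simp [h0]
  have hts1 : tsupport ψ1 ⊆ tsupport ψ :=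
    closure_minimal (fun p hp => by
      by_contra hpK
      exact hp (hsupψ1 p hpK)) (isClosed_tsupport ψ)
  have hts2 : tsupport ψ2 ⊆ tsupport ψ :=
    closure_minimal (fun p hp => by
      by_contra hpK
      exact hp (hsupψ2 p hpK)) (isClosed_tsupport ψ)
  have hsupD1 : ∀ p ∉ tsupport ψ, D1 p = 0 := by
    intro p hp
    have h0 : fderiv ℝ ψ1 p = 0 := by
      by_contra h
      exact hp (hts1 (support_fderiv_subset ℝ (Function.mem_support.mpr h)))
    rw [hD1def]
    simp [h0]
  have hsupD2 : ∀ p ∉ tsupport ψ, D2 p = 0 := by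
    intro p hp
    have h0 : fderiv ℝ ψ2 p = 0 := by
      by_contra h
      exact hp (hts2 (support_fderiv_subset ℝ (Function.mem_support.mpr h)))
    rw [hD2def]
    simp [h0]
  -- derivative of the partial maps
  have hcurve1 : ∀ x t : ℝ, HasDerivAt (fun s => ψ1 (x, s)) (D1 (x, t)) t := by
    intro x t
    have h1 : HasFDerivAt ψ1 (fderiv ℝ ψ1 (x, t)) (x, t) :=
      (hψ1.differentiable (by simp) (x, t)).hasFDerivAt
    have h2 : HasDerivAt (fun s : ℝ => (x, s)) ((0 : ℝ), (1 : ℝ)) t :=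
      (hasDerivAt_const t x).prodMk (hasDerivAt_id t)
    have h3 := h1.comp_hasDerivAt t h2
    rw [hD1def]
    exact h3
  have hcurve2 : ∀ x t : ℝ, HasDerivAt (fun y => ψ2 (y, t)) (D2 (x, t)) x := by
    intro x t
    have h1 : HasFDerivAt ψ2 (fderiv ℝ ψ2 (x, t)) (x, t) :=
      (hψ2.differentiable (by simp) (x, t)).hasFDerivAt
    have h2 : HasDerivAt (fun y : ℝ => (y, t)) ((1 : ℝ), (0 : ℝ)) x :=
      (hasDerivAt_id x).prodMk (hasDerivAt_const x t)
    have h3 := h1.comp_hasDerivAt x h2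
    rw [hD2def]
    exact h3
  -- pointwise bounds
  have hφxb : ∀ x ∈ Set.Ioo 0 a, ∀ t : ℝ, |φx x t| ≤ 2 * lam := by
    intro x hx t
    rw [hφx x t, (phi_eq a lam x t hlam hx.1 hx.2).1,
      abs_of_nonneg (by linarith [mcal_nonneg a lam x t])]
    linarith [mcal_le a lam x t hlam hx.1 hx.2]
  have hφtb : ∀ x ∈ Set.Ioo 0 a, ∀ t : ℝ, |φt x t| ≤ lam ^ 2 := by
    intro x hx t
    rw [hφt x t, (phi_eq a lam x t hlam hx.1 hx.2).2, abs_of_nonneg (sq_nonneg _)]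
    nlinarith [mcal_nonneg a lam x t, mcal_le a lam x t hlam hx.1 hx.2]
  have hFb : ∀ x ∈ Set.Ioo 0 a, ∀ t : ℝ, |Fcal a lam x t| ≤ lam ^ 2 * a := by
    intro x hx t
    obtain ⟨h1, h2⟩ := Fcal_bounds a lam x t hlam hx.1 hx.2
    rw [abs_of_nonneg h1]
    exact h2
  -- measurability
  have hmx : Measurable (fun p : ℝ × ℝ => φx p.1 p.2) := by
    have hrw : (fun p : ℝ × ℝ => φx p.1 p.2) = fun p : ℝ × ℝ =>
        if 0 ≤ p.2 ∧ p.2 ≤ lam * p.1 then 2 * p.2 / p.1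
        else if lam * p.1 ≤ p.2 ∧ p.2 ≤ lam * a then 2 * (lam * a - p.2) / (a - p.1)
        else 0 := funext fun p => hφx p.1 p.2
    rw [hrw]
    refine Measurable.ite ?_ ?_ (Measurable.ite ?_ ?_ measurable_const)
    · exact ((isClosed_le continuous_const continuous_snd).inter
        (isClosed_le continuous_snd (continuous_const.mul continuous_fst))).measurableSet
    · exact (measurable_const.mul measurable_snd).div measurable_fst
    · exact ((isClosed_le (continuous_const.mul continuous_fst) continuous_snd).inter
        (isClosed_le continuous_snd continuous_const)).measurableSet
    · exact (measurable_const.mul (measurable_const.sub measurable_snd)).div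
        (measurable_const.sub measurable_fst)
  have hmt : Measurable (fun p : ℝ × ℝ => φt p.1 p.2) := by
    have hrw : (fun p : ℝ × ℝ => φt p.1 p.2) = fun p : ℝ × ℝ =>
        if 0 ≤ p.2 ∧ p.2 ≤ lam * p.1 then (p.2 / p.1) ^ 2
        else if lam * p.1 ≤ p.2 ∧ p.2 ≤ lam * a then ((lam * a - p.2) / (a - p.1)) ^ 2
        else 0 := funext fun p => hφt p.1 p.2
    rw [hrw]
    refine Measurable.ite ?_ ?_ (Measurable.ite ?_ ?_ measurable_const)
    · exact ((isClosed_le continuous_const continuous_snd).inter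
        (isClosed_le continuous_snd (continuous_const.mul continuous_fst))).measurableSet
    · exact (measurable_snd.div measurable_fst).pow_const 2
    · exact ((isClosed_le (continuous_const.mul continuous_fst) continuous_snd).inter
        (isClosed_le continuous_snd continuous_const)).measurableSet
    · exact ((measurable_const.sub measurable_snd).div
        (measurable_const.sub measurable_fst)).pow_const 2
  have hmF : Measurable (fun p : ℝ × ℝ => Fcal a lam p.1 p.2) := by
    have hrw : (fun p : ℝ × ℝ => Fcal a lam p.1 p.2) = fun p : ℝ × ℝ =>
        if p.2 ≤ 0 then 0
        else if p.2 ≤ lam * p.1 then p.2 ^ 2 / p.1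
        else if p.2 ≤ lam * a then lam ^ 2 * a - (lam * a - p.2) ^ 2 / (a - p.1)
        else lam ^ 2 * a := rfl
    rw [hrw]
    refine Measurable.ite ?_ measurable_const (Measurable.ite ?_ ?_
      (Measurable.ite ?_ ?_ measurable_const))
    · exact (isClosed_le continuous_snd continuous_const).measurableSet
    · exact (isClosed_le continuous_snd (continuous_const.mul continuous_fst)).measurableSet
    · exact (measurable_snd.pow_const 2).div measurable_fst
    · exact (isClosed_le continuous_snd continuous_const).measurableSet
    · exact measurable_const.sub (((measurable_const.sub measurable_snd).pow_const 2).div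
        (measurable_const.sub measurable_fst))
  -- integrability
  have hψ1i : Integrable ψ1 := hψ1.continuous.integrable_of_hasCompactSupport hψ1s
  have hψ2i : Integrable ψ2 := hψ2.continuous.integrable_of_hasCompactSupport hψ2s
  have hD1i : Integrable D1 := hD1c.integrable_of_hasCompactSupport hD1s
  have hD2i : Integrable D2 := hD2c.integrable_of_hasCompactSupport hD2s
  have hI1 : Integrable (fun p : ℝ × ℝ => φx p.1 p.2 * ψ1 p) := by
    refine Integrable.mono' (hψ1i.abs.const_mul (2 * lam))
      ((hmx.mul hψ1.continuous.measurable).aestronglyMeasurable)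
      (ae_of_all _ fun p => ?_)
    by_cases hp : p ∈ tsupport ψ
    · rw [Real.norm_eq_abs, abs_mul]
      exact mul_le_mul_of_nonneg_right (hφxb p.1 (hsupp hp).1 p.2) (abs_nonneg _)
    · simp [hsupψ1 p hp]
  have hI2 : Integrable (fun p : ℝ × ℝ => φt p.1 p.2 * ψ2 p) := by
    refine Integrable.mono' (hψ2i.abs.const_mul (lam ^ 2))
      ((hmt.mul hψ2.continuous.measurable).aestronglyMeasurable)
      (ae_of_all _ fun p => ?_)
    by_cases hp : p ∈ tsupport ψ
    · rw [Real.norm_eq_abs, abs_mul]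
      exact mul_le_mul_of_nonneg_right (hφtb p.1 (hsupp hp).1 p.2) (abs_nonneg _)
    · simp [hsupψ2 p hp]
  have hIF1 : Integrable (fun p : ℝ × ℝ => Fcal a lam p.1 p.2 * D1 p) := by
    refine Integrable.mono' (hD1i.abs.const_mul (lam ^ 2 * a))
      ((hmF.mul hD1c.measurable).aestronglyMeasurable)
      (ae_of_all _ fun p => ?_)
    by_cases hp : p ∈ tsupport ψ
    · rw [Real.norm_eq_abs, abs_mul]
      exact mul_le_mul_of_nonneg_right (hFb p.1 (hsupp hp).1 p.2) (abs_nonneg _)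
    · simp [hsupD1 p hp]
  have hIF2 : Integrable (fun p : ℝ × ℝ => Fcal a lam p.1 p.2 * D2 p) := by
    refine Integrable.mono' (hD2i.abs.const_mul (lam ^ 2 * a))
      ((hmF.mul hD2c.measurable).aestronglyMeasurable)
      (ae_of_all _ fun p => ?_)
    by_cases hp : p ∈ tsupport ψ
    · rw [Real.norm_eq_abs, abs_mul]
      exact mul_le_mul_of_nonneg_right (hFb p.1 (hsupp hp).1 p.2) (abs_nonneg _)
    · simp [hsupD2 p hp]
  -- integration by parts in t
  have hibpt : ∀ x : ℝ, (∫ t : ℝ, φx x t * ψ1 (x, t)) =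
      - ∫ t : ℝ, Fcal a lam x t * D1 (x, t) := by
    intro x
    by_cases hx : x ∈ Set.Ioo 0 a
    · have hFt : ∀ t, HasDerivAt (Fcal a lam x) (φx x t) t := fun t => by
        rw [hφx]
        exact Fcal_hasDerivAt_t a lam x hlam hx.1 hx.2 t
      have hφxc : Continuous (fun t => φx x t) := by
        have hr : (fun t => φx x t) = fun t => 2 * mcal a lam x t :=
          funext fun t => by rw [hφx x t]; exact (phi_eq a lam x t hlam hx.1 hx.2).1
        rw [hr]
        unfold mcal
        exact continuous_const.mul (continuous_const.max
          ((continuous_id.div_const x).min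
            ((continuous_const.sub continuous_id).div_const (a - x))))
      have hFc : Continuous (Fcal a lam x) :=
        continuous_iff_continuousAt.mpr fun t => (hFt t).continuousAt
      have hψ1xc : Continuous (fun s => ψ1 (x, s)) :=
        hψ1.continuous.comp (continuous_const.prodMk continuous_id)
      have hD1xc : Continuous (fun s => D1 (x, s)) :=
        hD1c.comp (continuous_const.prodMk continuous_id)
      have hout : ∀ t : ℝ, t ∉ Set.Ioc t0 t1 → (x, t) ∉ tsupport ψ := by
        intro t ht hKm
        exact ht ⟨(hKt _ hKm).1, (hKt _ hKm).2.le⟩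
      have e1 : (∫ t : ℝ, φx x t * ψ1 (x, t)) = ∫ t in t0..t1, φx x t * ψ1 (x, t) := by
        rw [intervalIntegral.integral_of_le ht01]
        exact (setIntegral_eq_integral_of_forall_compl_eq_zero
          (fun t ht => by simp [hsupψ1 _ (hout t ht)])).symm
      have e2 : (∫ t : ℝ, Fcal a lam x t * D1 (x, t)) =
          ∫ t in t0..t1, Fcal a lam x t * D1 (x, t) := by
        rw [intervalIntegral.integral_of_le ht01]
        exact (setIntegral_eq_integral_of_forall_compl_eq_zero
          (fun t ht => by simp [hsupD1 _ (hout t ht)])).symm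
      have iA : IntervalIntegrable (fun t => φx x t * ψ1 (x, t)) volume t0 t1 :=
        (hφxc.mul hψ1xc).intervalIntegrable _ _
      have iB : IntervalIntegrable (fun t => Fcal a lam x t * D1 (x, t)) volume t0 t1 :=
        (hFc.mul hD1xc).intervalIntegrable _ _
      have hsum : (∫ t in t0..t1, (φx x t * ψ1 (x, t) + Fcal a lam x t * D1 (x, t))) =
          Fcal a lam x t1 * ψ1 (x, t1) - Fcal a lam x t0 * ψ1 (x, t0) :=
        intervalIntegral.integral_eq_sub_of_hasDerivAt
          (fun t _ => (hFt t).mul (hcurve1 x t)) (iA.add iB)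
      have hz1 : ψ1 (x, t1) = 0 :=
        hsupψ1 _ (fun hKm => absurd (hKt _ hKm).2 (lt_irrefl t1))
      have hz0 : ψ1 (x, t0) = 0 :=
        hsupψ1 _ (fun hKm => absurd (hKt _ hKm).1 (lt_irrefl t0))
      rw [intervalIntegral.integral_add iA iB, hz1, hz0] at hsum
      simp only [mul_zero, sub_zero] at hsum
      rw [e1, e2]
      linarith [hsum]
    · have h1 : ∀ t : ℝ, ψ1 (x, t) = 0 :=
        fun t => hsupψ1 _ (fun hKm => hx (hsupp hKm).1)
      have h2 : ∀ t : ℝ, D1 (x, t) = 0 :=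
        fun t => hsupD1 _ (fun hKm => hx (hsupp hKm).1)
      simp [h1, h2]
  -- integration by parts in x
  have hibpx : ∀ t : ℝ, (∫ y : ℝ, φt y t * ψ2 (y, t)) =
      ∫ y : ℝ, Fcal a lam y t * D2 (y, t) := by
    intro t
    have husub : Set.uIcc u0 u1 ⊆ Set.Ioo 0 a := by
      rw [uIcc_of_le hu01.le]
      exact fun y hy => ⟨lt_of_lt_of_le hu00 hy.1, lt_of_le_of_lt hy.2 hu1a⟩
    have hFx : ∀ y ∈ Set.uIcc u0 u1,
        HasDerivAt (fun z => Fcal a lam z t) (-(φt y t)) y := fun y hy => by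
      rw [hφt]
      exact Fcal_hasDerivAt_x a lam y t hlam (husub hy).1 (husub hy).2
    have hφtc : ContinuousOn (fun y => φt y t) (Set.uIcc u0 u1) := by
      have hm : ContinuousOn (fun y => mcal a lam y t) (Set.uIcc u0 u1) := by
        apply ContinuousOn.sup continuousOn_const
        apply ContinuousOn.inf
        · exact ContinuousOn.div continuousOn_const continuousOn_id
            (fun y hy => ne_of_gt (husub hy).1)
        · exact ContinuousOn.div continuousOn_const
            (continuousOn_const.sub continuousOn_id)
            (fun y hy => sub_ne_zero_of_ne (ne_of_gt (husub hy).2))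
      refine ContinuousOn.congr (hm.pow 2) (fun y hy => ?_)
      rw [hφt]
      exact (phi_eq a lam y t hlam (husub hy).1 (husub hy).2).2
    have hFcx : ContinuousOn (fun y => Fcal a lam y t) (Set.uIcc u0 u1) :=
      fun y hy => ((Fcal_hasDerivAt_x a lam y t hlam (husub hy).1
        (husub hy).2).continuousAt).continuousWithinAt
    have hψ2yc : Continuous (fun y => ψ2 (y, t)) :=
      hψ2.continuous.comp (continuous_id.prodMk continuous_const)
    have hD2yc : Continuous (fun y => D2 (y, t)) :=
      hD2c.comp (continuous_id.prodMk continuous_const)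
    have hout : ∀ y : ℝ, y ∉ Set.Ioc u0 u1 → (y, t) ∉ tsupport ψ := by
      intro y hy hKm
      obtain ⟨h1, h2⟩ := hKx _ hKm
      exact hy ⟨by linarith, by linarith⟩
    have e1 : (∫ y : ℝ, φt y t * ψ2 (y, t)) = ∫ y in u0..u1, φt y t * ψ2 (y, t) := by
      rw [intervalIntegral.integral_of_le hu01.le]
      exact (setIntegral_eq_integral_of_forall_compl_eq_zero
        (fun y hy => by simp [hsupψ2 _ (hout y hy)])).symm
    have e2 : (∫ y : ℝ, Fcal a lam y t * D2 (y, t)) =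
        ∫ y in u0..u1, Fcal a lam y t * D2 (y, t) := by
      rw [intervalIntegral.integral_of_le hu01.le]
      exact (setIntegral_eq_integral_of_forall_compl_eq_zero
        (fun y hy => by simp [hsupD2 _ (hout y hy)])).symm
    have iA : IntervalIntegrable (fun y => φt y t * ψ2 (y, t)) volume u0 u1 :=
      (hφtc.mul hψ2yc.continuousOn).intervalIntegrable
    have iB : IntervalIntegrable (fun y => Fcal a lam y t * D2 (y, t)) volume u0 u1 :=
      (hFcx.mul hD2yc.continuousOn).intervalIntegrable
    have iA' : IntervalIntegrable (fun y => -(φt y t) * ψ2 (y, t)) volume u0 u1 := by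
      have : (fun y => -(φt y t) * ψ2 (y, t)) = fun y => -(φt y t * ψ2 (y, t)) := by
        funext y
        ring
      rw [this]
      exact iA.neg
    have hsum : (∫ y in u0..u1, (-(φt y t) * ψ2 (y, t) + Fcal a lam y t * D2 (y, t))) =
        Fcal a lam u1 t * ψ2 (u1, t) - Fcal a lam u0 t * ψ2 (u0, t) :=
      intervalIntegral.integral_eq_sub_of_hasDerivAt
        (fun y hy => (hFx y hy).mul (hcurve2 y t)) (iA'.add iB)
    have hz1 : ψ2 (u1, t) = 0 :=
      hsupψ2 _ (fun hKm => absurd (hKx _ hKm).2 (not_le.mpr hu1x))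
    have hz0 : ψ2 (u0, t) = 0 :=
      hsupψ2 _ (fun hKm => absurd (hKx _ hKm).1 (not_le.mpr hu0x))
    rw [intervalIntegral.integral_add iA' iB, hz1, hz0] at hsum
    simp only [mul_zero, sub_zero] at hsum
    have hneg : (∫ y in u0..u1, -(φt y t) * ψ2 (y, t)) =
        - ∫ y in u0..u1, φt y t * ψ2 (y, t) := by
      rw [← intervalIntegral.integral_neg]
      congr 1
      funext y
      ring
    rw [e1, e2]
    rw [hneg] at hsum
    linarith [hsum]
  -- symmetry of second derivatives
  have hD12 : ∀ p : ℝ × ℝ, D1 p = D2 p := by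
    intro p
    have hdψ : ∀ q, HasFDerivAt ψ (fderiv ℝ ψ q) q :=
      fun q => (hψ.differentiable (by simp) q).hasFDerivAt
    have hdC : DifferentiableAt ℝ (fderiv ℝ ψ) p := (hC.differentiable (by simp)) p
    have hsym := second_derivative_symmetric hdψ hdC.hasFDerivAt
      ((0 : ℝ), (1 : ℝ)) ((1 : ℝ), (0 : ℝ))
    have e1 : D1 p = (fderiv ℝ (fderiv ℝ ψ) p ((0 : ℝ), (1 : ℝ))) (1, 0) := by
      simp only [hD1def, hψ1def]
      rw [fderiv_clm_apply hdC (differentiableAt_const _)]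
      simp
    have e2 : D2 p = (fderiv ℝ (fderiv ℝ ψ) p ((1 : ℝ), (0 : ℝ))) (0, 1) := by
      simp only [hD2def, hψ2def]
      rw [fderiv_clm_apply hdC (differentiableAt_const _)]
      simp
    rw [e1, e2, hsym]
  -- assembling everything
  have key : ∀ p : ℝ × ℝ, fderiv ℝ ψ p (φx p.1 p.2, φt p.1 p.2) =
      φx p.1 p.2 * ψ1 p + φt p.1 p.2 * ψ2 p := by
    intro p
    have hv : (φx p.1 p.2, φt p.1 p.2) =
        φx p.1 p.2 • ((1 : ℝ), (0 : ℝ)) + φt p.1 p.2 • ((0 : ℝ), (1 : ℝ)) := by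
      simp [Prod.ext_iff]
    rw [hv, map_add, _root_.map_smul, _root_.map_smul, hψ1def, hψ2def]
    simp [smul_eq_mul]
  have step1 : (∫ p in Set.Ioo 0 a ×ˢ (Set.univ : Set ℝ),
      fderiv ℝ ψ p (φx p.1 p.2, φt p.1 p.2)) =
      ∫ p : ℝ × ℝ, (φx p.1 p.2 * ψ1 p + φt p.1 p.2 * ψ2 p) := by
    simp only [key]
    refine setIntegral_eq_integral_of_forall_compl_eq_zero (fun p hp => ?_)
    have hpK : p ∉ tsupport ψ := fun h => hp (hsupp h)
    rw [hsupψ1 p hpK, hsupψ2 p hpK]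
    ring
  have step2 : (∫ p : ℝ × ℝ, (φx p.1 p.2 * ψ1 p + φt p.1 p.2 * ψ2 p)) =
      (∫ p : ℝ × ℝ, φx p.1 p.2 * ψ1 p) + ∫ p : ℝ × ℝ, φt p.1 p.2 * ψ2 p :=
    integral_add hI1 hI2
  have hA : (∫ p : ℝ × ℝ, φx p.1 p.2 * ψ1 p) =
      - ∫ p : ℝ × ℝ, Fcal a lam p.1 p.2 * D1 p := by
    have hI1' : Integrable (fun p : ℝ × ℝ => φx p.1 p.2 * ψ1 p)
        ((volume : Measure ℝ).prod volume) := by rwa [← Measure.volume_eq_prod]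
    have hIF1' : Integrable (fun p : ℝ × ℝ => Fcal a lam p.1 p.2 * D1 p)
        ((volume : Measure ℝ).prod volume) := by rwa [← Measure.volume_eq_prod]
    calc (∫ p : ℝ × ℝ, φx p.1 p.2 * ψ1 p)
        = ∫ p : ℝ × ℝ, φx p.1 p.2 * ψ1 p ∂((volume : Measure ℝ).prod volume) := by
          rw [← Measure.volume_eq_prod]
      _ = ∫ x : ℝ, ∫ t : ℝ, φx x t * ψ1 (x, t) := MeasureTheory.integral_prod _ hI1'
      _ = ∫ x : ℝ, - ∫ t : ℝ, Fcal a lam x t * D1 (x, t) := by simp only [hibpt]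
      _ = - ∫ x : ℝ, ∫ t : ℝ, Fcal a lam x t * D1 (x, t) := integral_neg _
      _ = - ∫ p : ℝ × ℝ, Fcal a lam p.1 p.2 * D1 p ∂((volume : Measure ℝ).prod volume) := by
          rw [MeasureTheory.integral_prod _ hIF1']
      _ = - ∫ p : ℝ × ℝ, Fcal a lam p.1 p.2 * D1 p := by rw [← Measure.volume_eq_prod]
  have hB : (∫ p : ℝ × ℝ, φt p.1 p.2 * ψ2 p) =
      ∫ p : ℝ × ℝ, Fcal a lam p.1 p.2 * D2 p := by
    have hI2' : Integrable (fun p : ℝ × ℝ => φt p.1 p.2 * ψ2 p)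
        ((volume : Measure ℝ).prod volume) := by rwa [← Measure.volume_eq_prod]
    have hIF2' : Integrable (fun p : ℝ × ℝ => Fcal a lam p.1 p.2 * D2 p)
        ((volume : Measure ℝ).prod volume) := by rwa [← Measure.volume_eq_prod]
    calc (∫ p : ℝ × ℝ, φt p.1 p.2 * ψ2 p)
        = ∫ p : ℝ × ℝ, φt p.1 p.2 * ψ2 p ∂((volume : Measure ℝ).prod volume) := by
          rw [← Measure.volume_eq_prod]
      _ = ∫ t : ℝ, ∫ y : ℝ, φt y t * ψ2 (y, t) := MeasureTheory.integral_prod_symm _ hI2'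
      _ = ∫ t : ℝ, ∫ y : ℝ, Fcal a lam y t * D2 (y, t) := by simp only [hibpx]
      _ = ∫ p : ℝ × ℝ, Fcal a lam p.1 p.2 * D2 p ∂((volume : Measure ℝ).prod volume) :=
          (MeasureTheory.integral_prod_symm _ hIF2').symm
      _ = ∫ p : ℝ × ℝ, Fcal a lam p.1 p.2 * D2 p := by rw [← Measure.volume_eq_prod]
  have hD : (∫ p : ℝ × ℝ, Fcal a lam p.1 p.2 * D1 p) =
      ∫ p : ℝ × ℝ, Fcal a lam p.1 p.2 * D2 p := by
    congr 1
    funext p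
    rw [hD12 p]
  rw [step1, step2, hA, hB, hD]
  ring

/-- **Example 1, field (6b).** The field
`φ(x,t) = (2t/x, (t/x)²)` for `0 ≤ t ≤ λx`,
`φ(x,t) = (2(λa−t)/(a−x), ((λa−t)/(a−x))²)` for `λx ≤ t ≤ λa`, `φ = (0,0)` otherwise,
is a calibration for the affine function `u(x) = λx` on `(0,a)`:
(i) it is bounded and continuous on `(0,a) × ℝ` with `|φˣ| ≤ 2λ`;
(ii) it is divergence-free in the distributional sense;
(iii) `(1/4)|φˣ|² ≤ φᵗ` (condition (a1) with `β = 0`);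
(iv) `0 ≤ ∫_{t₁}^{t₂} φˣ(x,t) dt ≤ aλ²` (giving (b1) when `aλ² ≤ α`);
(v) `φˣ(x,λx) = 2λ` and `φᵗ(x,λx) = λ²` (condition (a2)). -/
theorem statement_13 (a lam : ℝ) (ha : 0 < a) (hlam : 0 < lam)
    (φx φt : ℝ → ℝ → ℝ)
    (hφx : ∀ x t : ℝ, φx x t =
      if 0 ≤ t ∧ t ≤ lam * x then 2 * t / x
      else if lam * x ≤ t ∧ t ≤ lam * a then 2 * (lam * a - t) / (a - x)
      else 0)
    (hφt : ∀ x t : ℝ, φt x t =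
      if 0 ≤ t ∧ t ≤ lam * x then (t / x) ^ 2
      else if lam * x ≤ t ∧ t ≤ lam * a then ((lam * a - t) / (a - x)) ^ 2
      else 0) :
    -- (i) bounded and continuous on (0,a) × ℝ, with |φˣ| ≤ 2λ
    (ContinuousOn (fun p : ℝ × ℝ => (φx p.1 p.2, φt p.1 p.2))
      (Set.Ioo 0 a ×ˢ (Set.univ : Set ℝ)) ∧
      ∀ x ∈ Set.Ioo 0 a, ∀ t : ℝ, |φx x t| ≤ 2 * lam ∧ |φt x t| ≤ lam ^ 2) ∧
    -- (ii) divergence-free in the distributional sense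
    (∀ ψ : ℝ × ℝ → ℝ, ContDiff ℝ (⊤ : ℕ∞) ψ → HasCompactSupport ψ →
      tsupport ψ ⊆ Set.Ioo 0 a ×ˢ (Set.univ : Set ℝ) →
      (∫ p in Set.Ioo 0 a ×ˢ (Set.univ : Set ℝ),
        fderiv ℝ ψ p (φx p.1 p.2, φt p.1 p.2)) = 0) ∧
    -- (iii) (1/4)|φˣ|² ≤ φᵗ
    (∀ x ∈ Set.Ioo 0 a, ∀ t : ℝ, (1 / 4) * (φx x t) ^ 2 ≤ φt x t) ∧
    -- (iv) 0 ≤ ∫_{t₁}^{t₂} φˣ(x,t) dt ≤ aλ²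
    (∀ x ∈ Set.Ioo 0 a, ∀ t₁ t₂ : ℝ, t₁ < t₂ →
      0 ≤ (∫ t in t₁..t₂, φx x t) ∧ (∫ t in t₁..t₂, φx x t) ≤ a * lam ^ 2) ∧
    -- (v) φˣ(x,λx) = 2λ and φᵗ(x,λx) = λ²
    (∀ x ∈ Set.Ioo 0 a, φx x (lam * x) = 2 * lam ∧ φt x (lam * x) = lam ^ 2) := by
  -- pointwise identification with the min/max formula
  have hx2m : ∀ x ∈ Set.Ioo 0 a, ∀ t : ℝ, φx x t = 2 * mcal a lam x t := by
    intro x hx t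
    rw [hφx x t]
    exact (phi_eq a lam x t hlam hx.1 hx.2).1
  have ht2m : ∀ x ∈ Set.Ioo 0 a, ∀ t : ℝ, φt x t = (mcal a lam x t) ^ 2 := by
    intro x hx t
    rw [hφt x t]
    exact (phi_eq a lam x t hlam hx.1 hx.2).2
  refine ⟨⟨?_, ?_⟩, ?_, ?_, ?_, ?_⟩
  · -- (i) continuity
    apply ContinuousOn.prodMk
    · refine ContinuousOn.congr (f := fun p : ℝ × ℝ => 2 * mcal a lam p.1 p.2)
        (continuousOn_const.mul (mcal_continuousOn a lam)) ?_
      intro p hp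
      exact hx2m p.1 hp.1 p.2
    · refine ContinuousOn.congr (f := fun p : ℝ × ℝ => (mcal a lam p.1 p.2) ^ 2)
        ((mcal_continuousOn a lam).pow 2) ?_
      intro p hp
      exact ht2m p.1 hp.1 p.2
  · -- (i) bounds
    intro x hx t
    have h0 := mcal_nonneg a lam x t
    have h1 := mcal_le a lam x t hlam hx.1 hx.2
    constructor
    · rw [hx2m x hx t, abs_of_nonneg (by linarith)]
      linarith
    · rw [ht2m x hx t, abs_of_nonneg (sq_nonneg _)]
      nlinarith
  · -- (ii) divergence free
    intro ψ hψ hcs hsupp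
    exact div_free a lam ha hlam φx φt hφx hφt ψ hψ hcs hsupp
  · -- (iii)
    intro x hx t
    rw [hx2m x hx t, ht2m x hx t]
    nlinarith [sq_nonneg (mcal a lam x t)]
  · -- (iv)
    intro x hx t₁ t₂ h12
    have hder : ∀ t ∈ Set.uIcc t₁ t₂, HasDerivAt (Fcal a lam x) (φx x t) t := by
      intro t _
      rw [hφx x t]
      exact Fcal_hasDerivAt_t a lam x hlam hx.1 hx.2 t
    have hcont : Continuous (fun t => φx x t) := by
      have : (fun t => φx x t) = fun t => 2 * mcal a lam x t :=
        funext (fun t => hx2m x hx t)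
      rw [this]
      unfold mcal
      apply Continuous.mul continuous_const
      apply Continuous.max continuous_const
      exact Continuous.min (continuous_id.div_const x)
        ((continuous_const.sub continuous_id).div_const (a - x))
    have hint : IntervalIntegrable (fun t => φx x t) volume t₁ t₂ :=
      hcont.intervalIntegrable t₁ t₂
    have key : (∫ t in t₁..t₂, φx x t) = Fcal a lam x t₂ - Fcal a lam x t₁ :=
      intervalIntegral.integral_eq_sub_of_hasDerivAt hder hint
    have hb1 := Fcal_bounds a lam x t₁ hlam hx.1 hx.2
    have hb2 := Fcal_bounds a lam x t₂ hlam hx.1 hx.2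
    constructor
    · refine intervalIntegral.integral_nonneg h12.le (fun u _ => ?_)
      rw [hx2m x hx u]
      have := mcal_nonneg a lam x u
      linarith
    · rw [key]
      nlinarith [hb1.1, hb2.2]
  · -- (v)
    intro x hx
    have hx0 := hx.1
    have hlx : 0 ≤ lam * x := by positivity
    constructor
    · rw [hφx, if_pos ⟨hlx, le_refl _⟩]
      field_simp
    · rw [hφt, if_pos ⟨hlx, le_refl _⟩]
      rw [mul_div_assoc, div_self (ne_of_gt hx0)]
      ring
end

section
/- Let r>0, α>0, λ>0, let B(0,r)⊂ℝ² and set e₊:=(√3/2,−1/2), e₋:=(−√3/2,−1/2). Define φ^x:B(0,r)×ℝ→ℝ² by: φ^x(x,t):=λe₊ if (λ/4)(r+x·e₊) ≤ t ≤ (λ/4)(r+x·e₊)+α/λ; φ^x(x,t):=λe₋ if (λ/4)(−r+x·e₋)−α/λ ≤ t ≤ (λ/4)(−r+x·e₋); φ^x(x,t):=0 otherwise. Then for every x∈B(0,r) and all real t₁<t₂: |∫_{t₁}^{t₂} φ^x(x,t) dt| ≤ α. -/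
open MeasureTheory Set Filter
open scoped RealInnerProductSpace

set_option maxHeartbeats 1000000 in
/-- **Example 5, condition (b1) for the triple-junction calibration.** For the
piecewise constant field `φˣ` taking the value `λe₊` on the slab
`(λ/4)(r + x·e₊) ≤ t ≤ (λ/4)(r + x·e₊) + α/λ`, the value `λe₋` on the slab
`(λ/4)(−r + x·e₋) − α/λ ≤ t ≤ (λ/4)(−r + x·e₋)`, and `0` elsewhere, one has
`‖∫_{t₁}^{t₂} φˣ(x,t) dt‖ ≤ α` for every `x` in the ball `B(0,r)` and all `t₁ < t₂`. -/
theorem statement_14 (r α lam : ℝ) (hr : 0 < r) (hα : 0 < α) (hlam : 0 < lam)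
    (ep em : EuclideanSpace ℝ (Fin 2))
    (hep0 : ep 0 = Real.sqrt 3 / 2) (hep1 : ep 1 = -(1 / 2))
    (hem0 : em 0 = -(Real.sqrt 3 / 2)) (hem1 : em 1 = -(1 / 2))
    (φx : EuclideanSpace ℝ (Fin 2) → ℝ → EuclideanSpace ℝ (Fin 2))
    (hφx : ∀ (x : EuclideanSpace ℝ (Fin 2)) (t : ℝ), φx x t =
      if (lam / 4) * (r + ⟪x, ep⟫) ≤ t ∧ t ≤ (lam / 4) * (r + ⟪x, ep⟫) + α / lam
        then lam • ep
      else if (lam / 4) * (-r + ⟪x, em⟫) - α / lam ≤ t ∧ t ≤ (lam / 4) * (-r + ⟪x, em⟫)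
        then lam • em
      else 0) :
    ∀ x ∈ Metric.ball (0 : EuclideanSpace ℝ (Fin 2)) r,
      ∀ t₁ t₂ : ℝ, t₁ < t₂ → ‖∫ t in t₁..t₂, φx x t‖ ≤ α := by
  intro x hx t₁ t₂ ht
  have hle : t₁ ≤ t₂ := ht.le
  have hx' : ‖x‖ < r := by simpa using hx
  set a := lam / 4 * (r + ⟪x, ep⟫) with ha
  set b := lam / 4 * (-r + ⟪x, em⟫) with hb
  set c := α / lam with hc
  have hc0 : 0 < c := div_pos hα hlam
  have h3 : Real.sqrt 3 * Real.sqrt 3 = 3 := Real.mul_self_sqrt (by norm_num)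
  have hipp : ⟪ep, ep⟫ = 1 := by
    simp only [PiLp.inner_apply, RCLike.inner_apply, starRingEnd_apply, star_trivial,
      Fin.sum_univ_two, hep0, hep1]
    nlinarith
  have hipm : ⟪em, em⟫ = 1 := by
    simp only [PiLp.inner_apply, RCLike.inner_apply, starRingEnd_apply, star_trivial,
      Fin.sum_univ_two, hem0, hem1]
    nlinarith
  have hippm : ⟪ep, em⟫ = -(1/2) := by
    simp only [PiLp.inner_apply, RCLike.inner_apply, starRingEnd_apply, star_trivial,
      Fin.sum_univ_two, hep0, hep1, hem0, hem1]
    nlinarith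
  have hnep : ‖ep‖ = 1 := by
    have := real_inner_self_eq_norm_mul_norm ep
    nlinarith [norm_nonneg ep]
  have hnem : ‖em‖ = 1 := by
    have := real_inner_self_eq_norm_mul_norm em
    nlinarith [norm_nonneg em]
  have hxp : |⟪x, ep⟫| ≤ ‖x‖ := by
    have := abs_real_inner_le_norm x ep
    rwa [hnep, mul_one] at this
  have hxm : |⟪x, em⟫| ≤ ‖x‖ := by
    have := abs_real_inner_le_norm x em
    rwa [hnem, mul_one] at this
  have h_a_pos : 0 < a := by
    have := abs_le.1 hxp
    have : -‖x‖ ≤ ⟪x, ep⟫ := this.1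
    have h4 : 0 < lam / 4 := by linarith
    nlinarith
  have h_b_neg : b < 0 := by
    have := abs_le.1 hxm
    have : ⟪x, em⟫ ≤ ‖x‖ := this.2
    have h4 : 0 < lam / 4 := by linarith
    nlinarith
  have h_ba : b < a := h_b_neg.trans h_a_pos
  have hfun : ∀ t, φx x t = Set.indicator (Icc a (a+c)) (fun _ => lam • ep) t
      + Set.indicator (Icc (b-c) b) (fun _ => lam • em) t := by
    intro t
    rw [hφx]
    simp only [Set.indicator_apply, mem_Icc]
    split_ifs with h1 h2 h3' h4
    · exfalso; linarith [h1.1, h2.2]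
    · rw [add_zero]
    · rw [zero_add]
    · rw [add_zero]
  have hi1 : IntervalIntegrable (Set.indicator (Icc a (a+c)) fun _ => lam • ep)
      volume t₁ t₂ :=
    ((integrable_indicator_iff measurableSet_Icc).2
      (integrableOn_const measure_Icc_lt_top.ne)).intervalIntegrable
  have hi2 : IntervalIntegrable (Set.indicator (Icc (b-c) b) fun _ => lam • em)
      volume t₁ t₂ :=
    ((integrable_indicator_iff measurableSet_Icc).2
      (integrableOn_const measure_Icc_lt_top.ne)).intervalIntegrable
  have hInt : (∫ t in t₁..t₂, φx x t)
      = (volume (Ioc t₁ t₂ ∩ Icc a (a+c))).toReal • (lam • ep)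
        + (volume (Ioc t₁ t₂ ∩ Icc (b-c) b)).toReal • (lam • em) := by
    rw [intervalIntegral.integral_congr (fun t _ => hfun t),
      intervalIntegral.integral_add hi1 hi2,
      intervalIntegral.integral_of_le hle, intervalIntegral.integral_of_le hle,
      setIntegral_indicator measurableSet_Icc, setIntegral_indicator measurableSet_Icc,
      setIntegral_const, setIntegral_const]
    rfl
  set m₁ := (volume (Ioc t₁ t₂ ∩ Icc a (a+c))).toReal with hm₁
  set m₂ := (volume (Ioc t₁ t₂ ∩ Icc (b-c) b)).toReal with hm₂
  have hm₁0 : 0 ≤ m₁ := ENNReal.toReal_nonneg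
  have hm₂0 : 0 ≤ m₂ := ENNReal.toReal_nonneg
  have hm₁c : m₁ ≤ c := by
    have h := measure_mono (μ := volume) (inter_subset_right (s := Ioc t₁ t₂) (t := Icc a (a+c)))
    rw [Real.volume_Icc] at h
    have := ENNReal.toReal_mono (by simp) h
    rwa [ENNReal.toReal_ofReal (by linarith), add_sub_cancel_left] at this
  have hm₂c : m₂ ≤ c := by
    have h := measure_mono (μ := volume) (inter_subset_right (s := Ioc t₁ t₂) (t := Icc (b-c) b))
    rw [Real.volume_Icc] at h
    have := ENNReal.toReal_mono (by simp) h
    rwa [ENNReal.toReal_ofReal (by linarith), sub_sub_cancel] at this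
  have key : ∀ s s' : ℝ, 0 ≤ s → s ≤ α → 0 ≤ s' → s' ≤ α → ‖s • ep + s' • em‖ ≤ α := by
    intro s s' hs hsα hs' hs'α
    have hsq : ‖s • ep + s' • em‖^2 = s^2 - s*s' + s'^2 := by
      rw [norm_add_sq_real, norm_smul, norm_smul, real_inner_smul_left,
        real_inner_smul_right, hippm, hnep, hnem, Real.norm_eq_abs, Real.norm_eq_abs,
        abs_of_nonneg hs, abs_of_nonneg hs']
      ring
    nlinarith [norm_nonneg (s • ep + s' • em)]
  rw [hInt, smul_smul, smul_smul]
  have h1α : m₁ * lam ≤ α := by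
    have := mul_le_mul_of_nonneg_right hm₁c hlam.le
    rwa [div_mul_cancel₀ _ hlam.ne'] at this
  have h2α : m₂ * lam ≤ α := by
    have := mul_le_mul_of_nonneg_right hm₂c hlam.le
    rwa [div_mul_cancel₀ _ hlam.ne'] at this
  exact key _ _ (by positivity) h1α (by positivity) h2α
end

section
/- Let r>0, α>0, λ>0, let B(0,r)⊂ℝ², set e₊:=(√3/2,−1/2), e₋:=(−√3/2,−1/2), and define φ:B(0,r)×ℝ→ℝ²×ℝ by: φ(x,t):=(λe₊,λ²/4) if (λ/4)(r+x·e₊) ≤ t ≤ (λ/4)(r+x·e₊)+α/λ; φ(x,t):=(λe₋,λ²/4) if (λ/4)(−r+x·e₋)−α/λ ≤ t ≤ (λ/4)(−r+x·e₋); φ(x,t):=(0,0) otherwise. Then φ is divergence-free in the distributional sense: ∫_{B(0,r)×ℝ} φ(x,t)·∇_{(x,t)}ψ(x,t) dx dt = 0 for every ψ∈C_c^∞(B(0,r)×ℝ). -/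
open MeasureTheory Set Filter
open scoped RealInnerProductSpace

noncomputable section
local notation "E" => EuclideanSpace ℝ (Fin 2) × ℝ

instance : (volume : Measure (EuclideanSpace ℝ (Fin 2) × ℝ)).IsAddRightInvariant :=
  show ((volume : Measure (EuclideanSpace ℝ (Fin 2))).prod volume).IsAddRightInvariant from
    inferInstance

lemma slab_zero (v : E) (S : Set E) (hS : MeasurableSet S)
    (hinv : ∀ (τ : ℝ) (p : E), p + τ • v ∈ S ↔ p ∈ S)
    (ψ : E → ℝ) (hψ : ContDiff ℝ (⊤ : ℕ∞) ψ) (hc : HasCompactSupport ψ) :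
    ∫ p in S, fderiv ℝ ψ p v = 0 := by
  have hψc : Continuous ψ := hψ.continuous
  have hfc : Continuous (fderiv ℝ ψ) := hψ.continuous_fderiv (by simp)
  have hfs : HasCompactSupport (fderiv ℝ ψ) := hc.fderiv (𝕜 := ℝ)
  obtain ⟨C, hC⟩ := hfs.exists_bound_of_continuous hfc
  have hC0 : 0 ≤ C := le_trans (norm_nonneg _) (hC 0)
  set K : Set E := (fun q : ℝ × E => q.2 - q.1 • v) '' ((Icc (-1:ℝ) 1) ×ˢ tsupport ψ) with hKdef
  have hK : IsCompact K :=
    (isCompact_Icc.prod hc).image (continuous_snd.sub (continuous_fst.smul continuous_const))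
  have hmemK : ∀ τ ∈ Metric.ball (0:ℝ) 1, ∀ p : E, p + τ • v ∈ tsupport ψ → p ∈ K := by
    intro τ hτ p hp
    refine ⟨(τ, p + τ • v), ⟨?_, hp⟩, by simp⟩
    have := abs_le.1 (le_of_lt (by simpa [Real.dist_eq] using hτ))
    exact ⟨this.1, this.2⟩
  have main := hasDerivAt_integral_of_dominated_loc_of_deriv_le
      (F := fun (τ : ℝ) (p : E) => ψ (p + τ • v))
      (F' := fun (τ : ℝ) (p : E) => fderiv ℝ ψ (p + τ • v) v)
      (μ := volume.restrict S) (x₀ := (0:ℝ)) (s := Metric.ball (0:ℝ) 1)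
      (bound := K.indicator fun _ => C * ‖v‖)
      (Metric.ball_mem_nhds _ one_pos)
      (Filter.Eventually.of_forall fun τ =>
        ((hψc.comp (continuous_id.add continuous_const)).aestronglyMeasurable))
      (by simpa using ((hψc.integrable_of_hasCompactSupport hc).restrict (s := S)))
      (((ContinuousLinearMap.apply ℝ ℝ v).continuous.comp
        (hfc.comp (continuous_id.add continuous_const))).aestronglyMeasurable)
      (Filter.Eventually.of_forall fun p => by
        intro τ hτ
        by_cases hp : p + τ • v ∈ tsupport ψ
        · have hpK : p ∈ K := hmemK τ hτ p hp
          rw [Set.indicator_of_mem hpK]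
          calc ‖fderiv ℝ ψ (p + τ • v) v‖ ≤ ‖fderiv ℝ ψ (p + τ • v)‖ * ‖v‖ :=
                ContinuousLinearMap.le_opNorm _ _
            _ ≤ C * ‖v‖ := by gcongr; exact hC _
        · have : fderiv ℝ ψ (p + τ • v) = 0 := by
            have := support_fderiv_subset (𝕜 := ℝ) (f := ψ)
            by_contra h
            exact hp (this (Function.mem_support.2 h))
          simp only [this, ContinuousLinearMap.zero_apply, norm_zero]
          exact Set.indicator_nonneg (fun _ _ => by positivity) _)
      (by
        rw [integrable_indicator_iff hK.measurableSet]
        refine (integrableOn_const_iff enorm_ne_top).2 (Or.inr ?_)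
        rw [Measure.restrict_apply hK.measurableSet]
        exact (measure_mono inter_subset_left).trans_lt hK.measure_lt_top)
      (Filter.Eventually.of_forall fun p => by
        intro τ hτ
        have h1 : HasDerivAt (fun τ : ℝ => p + τ • v) v τ := by
          simpa using ((hasDerivAt_id τ).smul_const v).const_add p
        exact ((hψ.differentiable (by simp) (p + τ • v)).hasFDerivAt).comp_hasDerivAt τ h1)
  have hconst : (fun τ : ℝ => ∫ p in S, ψ (p + τ • v)) = fun _ => ∫ p in S, ψ p := by
    funext τ
    have h1 : ∀ p : E, S.indicator (fun p => ψ (p + τ • v)) p = S.indicator ψ (p + τ • v) := by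
      intro p
      by_cases hp : p ∈ S
      · rw [Set.indicator_of_mem hp, Set.indicator_of_mem ((hinv τ p).2 hp)]
      · rw [Set.indicator_of_notMem hp,
          Set.indicator_of_notMem (fun h => hp ((hinv τ p).1 h))]
    rw [← integral_indicator hS, ← integral_indicator hS]
    calc ∫ p, S.indicator (fun p => ψ (p + τ • v)) p
        = ∫ p, S.indicator ψ (p + τ • v) := by simp_rw [h1]
      _ = ∫ p, S.indicator ψ p := integral_add_right_eq_self _ _
  have hd := main.2
  rw [hconst] at hd
  have h0 := hd.unique (hasDerivAt_const 0 _)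
  simpa using h0

local notation "E2" => EuclideanSpace ℝ (Fin 2)

/-- **Example 5, condition (c1) for the triple-junction calibration.** The
piecewise constant field `φ` equal to `(λe₊, λ²/4)` on the slab
`(λ/4)(r + x·e₊) ≤ t ≤ (λ/4)(r + x·e₊) + α/λ`, to `(λe₋, λ²/4)` on the slab
`(λ/4)(−r + x·e₋) − α/λ ≤ t ≤ (λ/4)(−r + x·e₋)`, and to `(0,0)` elsewhere, is
divergence-free on `B(0,r) × ℝ` in the distributional sense. -/
theorem statement_16 (r α lam : ℝ) (hr : 0 < r) (hα : 0 < α) (hlam : 0 < lam)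
    (ep em : EuclideanSpace ℝ (Fin 2))
    (hep0 : ep 0 = Real.sqrt 3 / 2) (hep1 : ep 1 = -(1 / 2))
    (hem0 : em 0 = -(Real.sqrt 3 / 2)) (hem1 : em 1 = -(1 / 2))
    (φ : EuclideanSpace ℝ (Fin 2) × ℝ → EuclideanSpace ℝ (Fin 2) × ℝ)
    (hφ : ∀ p : EuclideanSpace ℝ (Fin 2) × ℝ, φ p =
      if (lam / 4) * (r + ⟪p.1, ep⟫) ≤ p.2 ∧
          p.2 ≤ (lam / 4) * (r + ⟪p.1, ep⟫) + α / lam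
        then (lam • ep, lam ^ 2 / 4)
      else if (lam / 4) * (-r + ⟪p.1, em⟫) - α / lam ≤ p.2 ∧
          p.2 ≤ (lam / 4) * (-r + ⟪p.1, em⟫)
        then (lam • em, lam ^ 2 / 4)
      else (0, 0)) :
    ∀ ψ : EuclideanSpace ℝ (Fin 2) × ℝ → ℝ, ContDiff ℝ (⊤ : ℕ∞) ψ → HasCompactSupport ψ →
      tsupport ψ ⊆ Metric.ball (0 : EuclideanSpace ℝ (Fin 2)) r ×ˢ (Set.univ : Set ℝ) →
      (∫ p in Metric.ball (0 : EuclideanSpace ℝ (Fin 2)) r ×ˢ (Set.univ : Set ℝ),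
        fderiv ℝ ψ p (φ p)) = 0 := by
  intro ψ hψ hcs hsupp
  have hψc : Continuous ψ := hψ.continuous
  have hfc : Continuous (fderiv ℝ ψ) := hψ.continuous_fderiv (by simp)
  have hfs : HasCompactSupport (fderiv ℝ ψ) := hcs.fderiv (𝕜 := ℝ)
  have h3 : Real.sqrt 3 * Real.sqrt 3 = 3 := Real.mul_self_sqrt (by norm_num)
  have hee : ⟪ep, ep⟫ = 1 := by
    simp only [PiLp.inner_apply, Fin.sum_univ_two, hep0, hep1, RCLike.inner_apply, conj_trivial]
    nlinarith
  have hmm2 : ⟪em, em⟫ = 1 := by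
    simp only [PiLp.inner_apply, Fin.sum_univ_two, hem0, hem1, RCLike.inner_apply, conj_trivial]
    nlinarith
  have hnep : ‖ep‖ = 1 := by
    have h := real_inner_self_eq_norm_mul_norm ep
    nlinarith [norm_nonneg ep]
  have hnem : ‖em‖ = 1 := by
    have h := real_inner_self_eq_norm_mul_norm em
    nlinarith [norm_nonneg em]
  set D : Set (E2 × ℝ) := Metric.ball (0 : E2) r ×ˢ (Set.univ : Set ℝ) with hDdef
  have hD : MeasurableSet D := Metric.isOpen_ball.measurableSet.prod MeasurableSet.univ
  set Sp : Set (E2 × ℝ) := {p | (lam / 4) * (r + ⟪p.1, ep⟫) ≤ p.2 ∧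
      p.2 ≤ (lam / 4) * (r + ⟪p.1, ep⟫) + α / lam} with hSpdef
  set Sm : Set (E2 × ℝ) := {p | (lam / 4) * (-r + ⟪p.1, em⟫) - α / lam ≤ p.2 ∧
      p.2 ≤ (lam / 4) * (-r + ⟪p.1, em⟫)} with hSmdef
  set vp : E2 × ℝ := (lam • ep, lam ^ 2 / 4) with hvpdef
  set vm : E2 × ℝ := (lam • em, lam ^ 2 / 4) with hvmdef
  have hcontp : Continuous fun p : E2 × ℝ => (lam / 4) * (r + ⟪p.1, ep⟫) :=
    continuous_const.mul (continuous_const.add (continuous_fst.inner continuous_const))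
  have hcontm : Continuous fun p : E2 × ℝ => (lam / 4) * (-r + ⟪p.1, em⟫) :=
    continuous_const.mul (continuous_const.add (continuous_fst.inner continuous_const))
  have hSp : MeasurableSet Sp :=
    ((isClosed_le hcontp continuous_snd).inter
      (isClosed_le continuous_snd (hcontp.add continuous_const))).measurableSet
  have hSm : MeasurableSet Sm :=
    ((isClosed_le (hcontm.sub continuous_const) continuous_snd).inter
      (isClosed_le continuous_snd hcontm)).measurableSet
  have hadd : ∀ (τ : ℝ) (p : E2 × ℝ) (e : E2) (c : ℝ),
      p + τ • ((lam • e, c) : E2 × ℝ) = (p.1 + (τ * lam) • e, p.2 + τ * c) := by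
    intro τ p e c
    refine Prod.ext ?_ ?_ <;> simp [smul_smul]
  have hIp : ∀ (x : E2) (c : ℝ) (e : E2), ⟪e, e⟫ = 1 → ⟪x + c • e, e⟫ = ⟪x, e⟫ + c := by
    intro x c e he
    rw [inner_add_left, real_inner_smul_left, he, mul_one]
  have hinvp : ∀ (τ : ℝ) (p : E2 × ℝ), p + τ • vp ∈ Sp ↔ p ∈ Sp := by
    intro τ p
    rw [hvpdef, hSpdef]
    simp only [Set.mem_setOf_eq, hadd, hIp _ _ _ hee]
    have he : lam / 4 * (r + (⟪p.1, ep⟫ + τ * lam))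
        = lam / 4 * (r + ⟪p.1, ep⟫) + τ * (lam ^ 2 / 4) := by ring
    rw [he]
    constructor <;> rintro ⟨h1, h2⟩ <;> exact ⟨by linarith, by linarith⟩
  have hinvm : ∀ (τ : ℝ) (p : E2 × ℝ), p + τ • vm ∈ Sm ↔ p ∈ Sm := by
    intro τ p
    rw [hvmdef, hSmdef]
    simp only [Set.mem_setOf_eq, hadd, hIp _ _ _ hmm2]
    have he : lam / 4 * (-r + (⟪p.1, em⟫ + τ * lam))
        = lam / 4 * (-r + ⟪p.1, em⟫) + τ * (lam ^ 2 / 4) := by ring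
    rw [he]
    constructor <;> rintro ⟨h1, h2⟩ <;> exact ⟨by linarith, by linarith⟩
  have hdisj : ∀ p : E2 × ℝ, p.1 ∈ Metric.ball (0 : E2) r → p ∈ Sp → p ∉ Sm := by
    intro p hp h1 h2
    rw [mem_ball_zero_iff] at hp
    have c1 := abs_le.1 ((abs_real_inner_le_norm p.1 ep).trans (by rw [hnep, mul_one]))
    have c2 := abs_le.1 ((abs_real_inner_le_norm p.1 em).trans (by rw [hnem, mul_one]))
    obtain ⟨h11, -⟩ := h1
    obtain ⟨-, h22⟩ := h2
    have e1 : 0 < r + ⟪p.1, ep⟫ := by linarith [c1.1]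
    have e2 : -r + ⟪p.1, em⟫ < 0 := by linarith [c2.2]
    have p1 : 0 < p.2 := lt_of_lt_of_le (mul_pos (by linarith) e1) h11
    have p2 : p.2 < 0 := lt_of_le_of_lt h22 (mul_neg_of_pos_of_neg (by linarith) e2)
    linarith
  set gp : E2 × ℝ → ℝ := fun p => fderiv ℝ ψ p vp with hgpdef
  set gm : E2 × ℝ → ℝ := fun p => fderiv ℝ ψ p vm with hgmdef
  have hpt : ∀ p ∈ D, fderiv ℝ ψ p (φ p) = Sp.indicator gp p + Sm.indicator gm p := by
    intro p hp
    rw [hφ p]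
    by_cases h1 : (lam / 4) * (r + ⟪p.1, ep⟫) ≤ p.2 ∧
        p.2 ≤ (lam / 4) * (r + ⟪p.1, ep⟫) + α / lam
    · have h1' : p ∈ Sp := h1
      have h2' : p ∉ Sm := hdisj p hp.1 h1'
      rw [if_pos h1, Set.indicator_of_mem h1', Set.indicator_of_notMem h2', add_zero]
    · have h1' : p ∉ Sp := h1
      rw [if_neg h1, Set.indicator_of_notMem h1', zero_add]
      by_cases h2 : (lam / 4) * (-r + ⟪p.1, em⟫) - α / lam ≤ p.2 ∧
          p.2 ≤ (lam / 4) * (-r + ⟪p.1, em⟫)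
      · have h2' : p ∈ Sm := h2
        rw [if_pos h2, Set.indicator_of_mem h2']
      · have h2' : p ∉ Sm := h2
        rw [if_neg h2, Set.indicator_of_notMem h2']
        exact (fderiv ℝ ψ p).map_zero
  have hgpc : Continuous gp := (ContinuousLinearMap.apply ℝ ℝ vp).continuous.comp hfc
  have hgmc : Continuous gm := (ContinuousLinearMap.apply ℝ ℝ vm).continuous.comp hfc
  have hgps : HasCompactSupport gp := hfs.comp_left (g := fun L : (E2 × ℝ) →L[ℝ] ℝ => L vp) rfl
  have hgms : HasCompactSupport gm := hfs.comp_left (g := fun L : (E2 × ℝ) →L[ℝ] ℝ => L vm) rfl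
  have hip : Integrable gp := hgpc.integrable_of_hasCompactSupport hgps
  have him : Integrable gm := hgmc.integrable_of_hasCompactSupport hgms
  have hsubp : Function.support gp ⊆ D := fun p hp =>
    hsupp (support_fderiv_subset ℝ (Function.mem_support.2 fun h => hp (by simp [hgpdef, h])))
  have hsubm : Function.support gm ⊆ D := fun p hp =>
    hsupp (support_fderiv_subset ℝ (Function.mem_support.2 fun h => hp (by simp [hgmdef, h])))
  have hA : ∫ p in D, Sp.indicator gp p = ∫ p in Sp, gp p := by
    rw [setIntegral_indicator hSp]
    conv_rhs => rw [← Set.indicator_eq_self.2 hsubp]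
    rw [setIntegral_indicator hD, inter_comm]
  have hB : ∫ p in D, Sm.indicator gm p = ∫ p in Sm, gm p := by
    rw [setIntegral_indicator hSm]
    conv_rhs => rw [← Set.indicator_eq_self.2 hsubm]
    rw [setIntegral_indicator hD, inter_comm]
  calc ∫ p in D, fderiv ℝ ψ p (φ p)
      = ∫ p in D, (Sp.indicator gp p + Sm.indicator gm p) :=
        setIntegral_congr_fun hD hpt
    _ = (∫ p in D, Sp.indicator gp p) + ∫ p in D, Sm.indicator gm p :=
        integral_add ((hip.indicator hSp).restrict) ((him.indicator hSm).restrict)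
    _ = (∫ p in Sp, gp p) + ∫ p in Sm, gm p := by rw [hA, hB]
    _ = 0 := by
        rw [slab_zero vp Sp hSp hinvp ψ hψ hcs, slab_zero vm Sm hSm hinvm ψ hψ hcs, add_zero]

end
end
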